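/- arXiv:1403.4696 — 3 statements merged into one kernel-verified Lean document; each statement's English description precedes it below -/
import Mathlib

section
/- Proposition 2 (the upper sets empty in finite time): under Assumption 1 and the γ/α setup, for every initial vector x(0) ∈ ℝ^n there exists a finite time K such that for all k ≥ K, X4(k) ∪ X5(k) ∪ X6(k) = ∅, i.e. x_i(k) ≤ m(k) + 1 + α_i for every agent i. -/
open Finset Filter

/-- Assumption 1 on the weight matrix `W` relative to the graph `G`:
symmetric, nonnegative, rows sum to 1, diagonally dominant (`w_ii > 1/2`),
respects the communication graph, and rational weights in `(0,1)` on edges. -/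
def Assumption1 {n : ℕ} (G : SimpleGraph (Fin n)) (W : Matrix (Fin n) (Fin n) ℝ) : Prop :=
  (∀ i j, W i j = W j i) ∧
  (∀ i j, 0 ≤ W i j) ∧
  (∀ i, ∑ j, W i j = 1) ∧
  (∀ i, 1 / 2 < W i i) ∧
  (∀ i j, i ≠ j → ¬G.Adj i j → W i j = 0) ∧
  (∀ i j, G.Adj i j → (∃ q : ℚ, (q : ℝ) = W i j) ∧ 0 < W i j ∧ W i j < 1)

/-- The quantized system `x(k+1) = W ⌊x(k)⌋ + x(k) − ⌊x(k)⌋`, componentwise. -/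
def Traj {n : ℕ} (W : Matrix (Fin n) (Fin n) ℝ) (x : ℕ → Fin n → ℝ) : Prop :=
  ∀ k i, x (k + 1) i = (∑ j, W i j * (⌊x k j⌋ : ℝ)) + x k i - (⌊x k i⌋ : ℝ)

/-- `m(k) = min_i ⌊x_i(k)⌋`. -/
noncomputable def mfun {n : ℕ} (hn : 0 < n) (x : ℕ → Fin n → ℝ) (k : ℕ) : ℤ :=
  Finset.univ.inf' ⟨⟨0, hn⟩, Finset.mem_univ _⟩ fun i => ⌊x k i⌋

/-- `M(k) = max_i ⌊x_i(k)⌋`. -/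
noncomputable def Mfun {n : ℕ} (hn : 0 < n) (x : ℕ → Fin n → ℝ) (k : ℕ) : ℤ :=
  Finset.univ.sup' ⟨⟨0, hn⟩, Finset.mem_univ _⟩ fun i => ⌊x k i⌋

/-- The γ gap conditions (fractional part `c_i(k) = x_i(k) − ⌊x_i(k)⌋`). -/
def GammaSetup {n : ℕ} (W : Matrix (Fin n) (Fin n) ℝ) (x : ℕ → Fin n → ℝ) (γ : ℝ) : Prop :=
  0 < γ ∧
  ∀ i k,
    (x k i - (⌊x k i⌋ : ℝ) > 1 - W i i → x k i - (⌊x k i⌋ : ℝ) - (1 - W i i) ≥ 2 * γ) ∧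
    (1 - (x k i - (⌊x k i⌋ : ℝ)) > 1 - W i i →
      1 - (x k i - (⌊x k i⌋ : ℝ)) - (1 - W i i) ≥ 2 * γ) ∧
    1 - (x k i - (⌊x k i⌋ : ℝ)) ≥ 2 * γ ∧
    1 / 2 - (1 - W i i) ≥ 2 * γ

/-- `α_i = 1 − w_ii + γ`. -/
noncomputable def alpha {n : ℕ} (W : Matrix (Fin n) (Fin n) ℝ) (γ : ℝ) (i : Fin n) : ℝ :=
  1 - W i i + γ

/-- The Lyapunov function `V(k) = Σ_i max{|x_i(k) − m(k) − 1| − α_i, 0}`. -/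
noncomputable def Vfun {n : ℕ} (hn : 0 < n) (W : Matrix (Fin n) (Fin n) ℝ) (γ : ℝ)
    (x : ℕ → Fin n → ℝ) (k : ℕ) : ℝ :=
  ∑ i, max (|x k i - (mfun hn x k : ℝ) - 1| - alpha W γ i) 0

/-- `δ = min_{(p,q) ∈ E} w_pq`. -/
noncomputable def deltaMin {n : ℕ} (G : SimpleGraph (Fin n)) (W : Matrix (Fin n) (Fin n) ℝ) : ℝ :=
  sInf {r : ℝ | ∃ p q, G.Adj p q ∧ r = W p q}

open Classical in
/-- `T_s(k0,k)`: number of times `t ∈ [k0,k]` at which node `s` lies in `X1 ∪ X2`,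
i.e. `x_s(t) < m(t) + 1`. -/
noncomputable def Tcount {n : ℕ} (hn : 0 < n) (x : ℕ → Fin n → ℝ) (s : Fin n)
    (k0 k : ℕ) : ℕ :=
  ((Finset.Icc k0 k).filter fun t => x t s < (mfun hn x t : ℝ) + 1).card

/-!
The weights are rational, so a trajectory stays in a translate of a lattice `c ℤⁿ`; its floors
stay between their initial extremes, hence it takes finitely many values and, being deterministic,
is eventually periodic. For every fixed integer `m`, the excess `∑ᵢ max (xᵢ - (m + 1 + αᵢ)) 0` is
nonincreasing along the trajectory and drops by at least `γ` whenever a node crosses its threshold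
`m + 1 + αᵢ`. On the periodic part `m(k)` is constant, and so is this excess for `m = m(k)`; hence
no node crosses, and the set of nodes above threshold is invariant. If it contained a node `i`,
then `⌊xᵢ⌋ ≥ m + 1` throughout, while a node `j` with `⌊xⱼ⌋ = m` at the start of the period stays
below threshold, so `⌊xⱼ⌋ ≤ m + 1` throughout. But the floors summed over a period form a
`W`-harmonic vector, which is constant on the connected graph: a contradiction.
-/

open Matrix

theorem exists_forall_mem_zmultiples_of_rat {ι : Type*} [Fintype ι] (f : ι → ℝ)
    (hf : ∀ i, ∃ q : ℚ, (q : ℝ) = f i) : ∃ c : ℝ, ∀ i, f i ∈ AddSubgroup.zmultiples c := by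
  choose q hq using hf
  refine ⟨((∏ i, (q i).den : ℕ) : ℝ)⁻¹, fun i => ?_⟩
  obtain ⟨d, hd⟩ := Finset.dvd_prod_of_mem (fun i => (q i).den) (Finset.mem_univ i)
  refine AddSubgroup.mem_zmultiples_iff.2 ⟨(q i).num * d, ?_⟩
  have hD : ∏ j, (q j).den ≠ 0 := Finset.prod_ne_zero_iff.2 fun j _ => (q j).den_nz
  have hden : ((q i).den : ℝ) ≠ 0 := by exact_mod_cast (q i).den_nz
  have hd0 : (d : ℝ) ≠ 0 := by exact_mod_cast right_ne_zero_of_mul (hd ▸ hD)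
  rw [hd, ← hq i, Rat.cast_def, zsmul_eq_mul]
  push_cast
  field_simp

theorem exists_periodic_tail {α : Type*} {f : α → α} {x : ℕ → α}
    (hx : ∀ k, x (k + 1) = f (x k)) (hfin : (Set.range x).Finite) :
    ∃ k₀ p, 0 < p ∧ Function.Periodic (fun t => x (k₀ + t)) p := by
  obtain ⟨a, b, hab, hxab⟩ := hfin.exists_lt_map_eq_of_forall_mem (f := x) Set.mem_range_self
  have hshift : ∀ t, x (a + t) = x (b + t) := by
    intro t
    induction t with
    | zero => exact hxab
    | succ t ih => rw [← add_assoc, ← add_assoc, hx, hx, ih]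
  refine ⟨a, b - a, by omega, fun t => ?_⟩
  simp only [show a + (t + (b - a)) = b + t by omega, hshift]

theorem Monotone.eq_of_periodic_tail {α : Type*} [PartialOrder α] {g : ℕ → α} (hg : Monotone g)
    {k₀ p : ℕ} (hp : 0 < p) (hper : Function.Periodic (fun t => g (k₀ + t)) p) {k : ℕ}
    (hk : k₀ ≤ k) : g k = g k₀ := by
  refine le_antisymm ?_ (hg hk)
  calc g k ≤ g (k₀ + k * p) := hg (by nlinarith)
    _ = g k₀ := hper.nat_mul_eq k

theorem SimpleGraph.Connected.eq_of_sum_mul_sub_eq_zero {V : Type*} [Fintype V]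
    {G : SimpleGraph V} (hG : G.Connected) {W : Matrix V V ℝ} (hnn : ∀ i j, 0 ≤ W i j)
    (hpos : ∀ i j, G.Adj i j → 0 < W i j) {σ : V → ℝ}
    (hσ : ∀ i, ∑ j, W i j * (σ j - σ i) = 0) (i j : V) : σ i = σ j := by
  have := hG.nonempty
  obtain ⟨a, ha⟩ := Finite.exists_max σ
  have hstep : ∀ u v, G.Adj u v → σ u = σ a → σ v = σ a := by
    intro u v huv hu
    have hterm := (Finset.sum_eq_zero_iff_of_nonpos fun j _ =>
      mul_nonpos_of_nonneg_of_nonpos (hnn u j) (by linarith [ha j])).1 (hσ u) v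
      (Finset.mem_univ v)
    rcases mul_eq_zero.1 hterm with h | h
    · exact absurd h (hpos u v huv).ne'
    · linarith
  have hwalk : ∀ {u v}, G.Walk u v → σ u = σ a → σ v = σ a := by
    intro u v w
    induction w with
    | nil => exact id
    | cons huv _ ih => exact fun hu => ih (hstep _ _ huv hu)
  obtain ⟨wi⟩ := hG.preconnected a i
  obtain ⟨wj⟩ := hG.preconnected a j
  rw [hwalk wi rfl, hwalk wj rfl]

theorem le_sum_mul_sub {ι : Type*} [Fintype ι] [DecidableEq ι] {w : ι → ℝ}
    (hw : ∀ j, 0 ≤ w j) (hsum : ∑ j, w j = 1) {S : Finset ι} {f : ι → ℝ} {c : ℝ}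
    (hS : ∀ l ∈ S, c ≤ f l) {i : ι} (hi : i ∈ S) :
    (1 - w i) * (c - f i) - ∑ l ∈ Sᶜ, w l * (c - f l) ≤ ∑ l, w l * (f l - f i) := by
  have hsplit : ∑ l, w l * (f l - f i)
      = ∑ l ∈ S, w l * (f l - c) + ∑ l ∈ Sᶜ, w l * (f l - c) + (c - f i) := by
    rw [Finset.sum_add_sum_compl, ← mul_one (c - f i), ← hsum, Finset.mul_sum,
      ← Finset.sum_add_distrib]
    exact Finset.sum_congr rfl fun l _ => by ring
  have hS' : w i * (f i - c) ≤ ∑ l ∈ S, w l * (f l - c) :=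
    Finset.single_le_sum (f := fun l => w l * (f l - c))
      (fun l hl => mul_nonneg (hw l) (sub_nonneg.2 (hS l hl))) hi
  have hSc : ∑ l ∈ Sᶜ, w l * (f l - c) = -∑ l ∈ Sᶜ, w l * (c - f l) := by
    rw [← Finset.sum_neg_distrib]; exact Finset.sum_congr rfl fun l _ => by ring
  linarith

theorem sum_mul_sub_le {ι : Type*} [Fintype ι] [DecidableEq ι] {w : ι → ℝ}
    (hw : ∀ j, 0 ≤ w j) (hsum : ∑ j, w j = 1) {S : Finset ι} {f : ι → ℝ} {c : ℝ}
    (hS : ∀ l ∈ S, f l ≤ c) {i : ι} (hi : i ∈ S) :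
    ∑ l, w l * (f l - f i) ≤ (1 - w i) * (c - f i) + ∑ l ∈ Sᶜ, w l * (f l - c) := by
  have h := le_sum_mul_sub hw hsum (f := -f) (c := -c) (fun l hl => neg_le_neg (hS l hl)) hi
  simp only [Pi.neg_apply] at h
  have e1 : ∑ l, w l * (-f l - -f i) = -∑ l, w l * (f l - f i) := by
    rw [← Finset.sum_neg_distrib]; exact Finset.sum_congr rfl fun l _ => by ring
  have e2 : ∑ l ∈ Sᶜ, w l * (-c - -f l) = ∑ l ∈ Sᶜ, w l * (f l - c) :=
    Finset.sum_congr rfl fun l _ => by ring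
  rw [e1, e2] at h
  linarith

theorem Matrix.IsSymm.sum_sum_mul_sub {ι : Type*} [Fintype ι] [DecidableEq ι]
    {W : Matrix ι ι ℝ} (hW : W.IsSymm) (A : Finset ι) (f : ι → ℝ) (c : ℝ) :
    ∑ i ∈ A, ∑ j, W i j * (f j - f i)
      = -(∑ i ∈ A, ∑ j ∈ Aᶜ, W i j * (c - f j) + ∑ i ∈ Aᶜ, ∑ j ∈ A, W i j * (f j - c)) := by
  have hinner : ∑ i ∈ A, ∑ j ∈ A, W i j * (f j - f i) = 0 := by
    have h : ∑ i ∈ A, ∑ j ∈ A, W i j * (f j - f i)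
        = -∑ i ∈ A, ∑ j ∈ A, W i j * (f j - f i) := by
      conv_lhs => rw [Finset.sum_comm]
      rw [← Finset.sum_neg_distrib]
      refine Finset.sum_congr rfl fun i _ => ?_
      rw [← Finset.sum_neg_distrib]
      exact Finset.sum_congr rfl fun j _ => by rw [hW.apply]; ring
    linarith
  have hcross : ∑ i ∈ A, ∑ j ∈ Aᶜ, W i j * (f i - c) = ∑ i ∈ Aᶜ, ∑ j ∈ A, W i j * (f j - c) := by
    rw [Finset.sum_comm]
    exact Finset.sum_congr rfl fun i _ => Finset.sum_congr rfl fun j _ => by rw [hW.apply]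
  calc ∑ i ∈ A, ∑ j, W i j * (f j - f i)
        = ∑ i ∈ A, ∑ j ∈ A, W i j * (f j - f i) + ∑ i ∈ A, ∑ j ∈ Aᶜ, W i j * (f j - f i) := by
          rw [← Finset.sum_add_distrib]
          exact Finset.sum_congr rfl fun i _ => (Finset.sum_add_sum_compl A _).symm
    _ = -(∑ i ∈ A, ∑ j ∈ Aᶜ, W i j * (c - f j) + ∑ i ∈ A, ∑ j ∈ Aᶜ, W i j * (f i - c)) := by
          rw [hinner, zero_add, ← Finset.sum_add_distrib, ← Finset.sum_neg_distrib]
          refine Finset.sum_congr rfl fun i _ => ?_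
          rw [← Finset.sum_add_distrib, ← Finset.sum_neg_distrib]
          exact Finset.sum_congr rfl fun j _ => by ring
    _ = _ := by rw [hcross]

section QuantizedStep

variable {n : ℕ} {W : Matrix (Fin n) (Fin n) ℝ} {x : ℕ → Fin n → ℝ}

noncomputable def quantStep (W : Matrix (Fin n) (Fin n) ℝ) (v : Fin n → ℝ) : Fin n → ℝ :=
  fun i => (∑ j, W i j * (⌊v j⌋ : ℝ)) + v i - ⌊v i⌋

theorem Traj.succ (hx : Traj W x) (k : ℕ) : x (k + 1) = quantStep W (x k) :=
  funext (hx k)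

theorem quantStep_apply_eq_add_sum (hW : W ∈ rowStochastic ℝ (Fin n)) (v : Fin n → ℝ)
    (i : Fin n) : quantStep W v i = v i + ∑ j, W i j * ((⌊v j⌋ : ℝ) - ⌊v i⌋) := by
  simp only [quantStep, mul_sub, Finset.sum_sub_distrib, ← Finset.sum_mul,
    sum_row_of_mem_rowStochastic hW, one_mul]
  ring

theorem le_floor_quantStep (hW : W ∈ rowStochastic ℝ (Fin n)) {v : Fin n → ℝ} {a : ℤ}
    (ha : ∀ j, a ≤ ⌊v j⌋) (i : Fin n) : a ≤ ⌊quantStep W v i⌋ := by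
  have havg : (a : ℝ) ≤ ∑ j, W i j * (⌊v j⌋ : ℝ) := by
    calc (a : ℝ) = ∑ j, W i j * a := by
          rw [← Finset.sum_mul, sum_row_of_mem_rowStochastic hW, one_mul]
      _ ≤ _ := Finset.sum_le_sum fun j _ =>
        mul_le_mul_of_nonneg_left (by exact_mod_cast ha j) (nonneg_of_mem_rowStochastic hW)
  rw [Int.le_floor, quantStep]
  linarith [Int.floor_le (v i)]

theorem floor_quantStep_le (hW : W ∈ rowStochastic ℝ (Fin n)) {v : Fin n → ℝ} {b : ℤ}
    (hb : ∀ j, ⌊v j⌋ ≤ b) (i : Fin n) : ⌊quantStep W v i⌋ ≤ b := by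
  have havg : ∑ j, W i j * (⌊v j⌋ : ℝ) ≤ b := by
    calc ∑ j, W i j * (⌊v j⌋ : ℝ) ≤ ∑ j, W i j * b := Finset.sum_le_sum fun j _ =>
          mul_le_mul_of_nonneg_left (by exact_mod_cast hb j) (nonneg_of_mem_rowStochastic hW)
      _ = b := by rw [← Finset.sum_mul, sum_row_of_mem_rowStochastic hW, one_mul]
  rw [Int.floor_le_iff, quantStep]
  linarith [Int.lt_floor_add_one (v i)]

theorem Traj.monotone_mfun (hW : W ∈ rowStochastic ℝ (Fin n)) (hx : Traj W x) (hn : 0 < n) :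
    Monotone (mfun hn x) :=
  monotone_nat_of_le_succ fun k => Finset.le_inf' _ _ fun i _ => by
    rw [hx.succ]; exact le_floor_quantStep hW (fun j => Finset.inf'_le _ (Finset.mem_univ j)) i

theorem Traj.floor_mem_Icc (hW : W ∈ rowStochastic ℝ (Fin n)) (hx : Traj W x) {a b : ℤ}
    (h₀ : ∀ j, ⌊x 0 j⌋ ∈ Set.Icc a b) (k : ℕ) (j : Fin n) : ⌊x k j⌋ ∈ Set.Icc a b := by
  induction k generalizing j with
  | zero => exact h₀ j
  | succ k ih =>
    rw [hx.succ]
    exact ⟨le_floor_quantStep hW (fun j => (ih j).1) j, floor_quantStep_le hW (fun j => (ih j).2) j⟩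

theorem Traj.sub_mem_zmultiples (hW : W ∈ rowStochastic ℝ (Fin n)) (hx : Traj W x) {c : ℝ}
    (hc : ∀ i j, W i j ∈ AddSubgroup.zmultiples c) (k : ℕ) (i : Fin n) :
    x k i - x 0 i ∈ AddSubgroup.zmultiples c := by
  induction k generalizing i with
  | zero => simp
  | succ k ih =>
    rw [hx.succ, quantStep_apply_eq_add_sum hW, add_sub_right_comm]
    refine add_mem (ih i) (sum_mem fun j _ => ?_)
    rw [mul_comm, ← Int.cast_sub, ← zsmul_eq_mul]
    exact zsmul_mem (hc i j) _

theorem Traj.finite_range (hW : W ∈ rowStochastic ℝ (Fin n)) (hx : Traj W x) {c : ℝ}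
    (hc : ∀ i j, W i j ∈ AddSubgroup.zmultiples c) : (Set.range x).Finite := by
  obtain ⟨a, ha⟩ := (Set.finite_range fun j => ⌊x 0 j⌋).bddBelow
  obtain ⟨b, hb⟩ := (Set.finite_range fun j => ⌊x 0 j⌋).bddAbove
  have hfloor := hx.floor_mem_Icc hW fun j => ⟨ha ⟨j, rfl⟩, hb ⟨j, rfl⟩⟩
  have hbox : ∀ k i, (a : ℝ) ≤ x k i ∧ x k i ≤ b + 1 := fun k i => by
    have ha' : (a : ℝ) ≤ ⌊x k i⌋ := by exact_mod_cast (hfloor k i).1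
    have hb' : (⌊x k i⌋ : ℝ) ≤ b := by exact_mod_cast (hfloor k i).2
    constructor <;> linarith [Int.floor_le (x k i), Int.lt_floor_add_one (x k i)]
  set K := Set.Icc ((a : ℝ) - (b + 1)) (b + 1 - a) ∩ AddSubgroup.zmultiples c
  have hK : K.Finite := Metric.finite_isBounded_inter_isClosed
    (SetLike.isDiscrete_iff_discreteTopology.2 inferInstance) (Metric.isBounded_Icc _ _)
    AddSubgroup.isClosed_of_discrete
  refine ((Set.Finite.pi fun _ => hK).image (· + x 0)).subset ?_
  rintro _ ⟨k, rfl⟩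
  refine ⟨x k - x 0, fun i _ => ⟨?_, hx.sub_mem_zmultiples hW hc k i⟩, sub_add_cancel _ _⟩
  obtain ⟨hk₁, hk₂⟩ := hbox k i
  obtain ⟨h0₁, h0₂⟩ := hbox 0 i
  constructor <;> simp only [Pi.sub_apply] <;> linarith

theorem Traj.mfun_eq_of_periodic (hW : W ∈ rowStochastic ℝ (Fin n)) (hx : Traj W x)
    (hn : 0 < n) {k₀ p : ℕ} (hp : 0 < p) (hper : Function.Periodic (fun t => x (k₀ + t)) p)
    {k : ℕ} (hk : k₀ ≤ k) : mfun hn x k = mfun hn x k₀ :=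
  (hx.monotone_mfun hW hn).eq_of_periodic_tail hp
    (hper.comp fun v => Finset.univ.inf' ⟨⟨0, hn⟩, Finset.mem_univ _⟩ fun i => ⌊v i⌋) hk

theorem Traj.sum_mul_sub_sum_floor_eq_zero_of_periodic (hW : W ∈ rowStochastic ℝ (Fin n))
    (hx : Traj W x) {k₀ p : ℕ} (hper : Function.Periodic (fun t => x (k₀ + t)) p) (i : Fin n) :
    ∑ j, W i j * (∑ t ∈ Finset.range p, (⌊x (k₀ + t) j⌋ : ℝ)
      - ∑ t ∈ Finset.range p, (⌊x (k₀ + t) i⌋ : ℝ)) = 0 := by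
  calc _ = ∑ t ∈ Finset.range p, ∑ j, W i j * ((⌊x (k₀ + t) j⌋ : ℝ) - ⌊x (k₀ + t) i⌋) := by
        rw [Finset.sum_comm]
        simp only [← Finset.mul_sum, Finset.sum_sub_distrib]
    _ = ∑ t ∈ Finset.range p, (x (k₀ + (t + 1)) i - x (k₀ + t) i) := by
        refine Finset.sum_congr rfl fun t _ => ?_
        rw [← add_assoc, hx.succ, quantStep_apply_eq_add_sum hW]
        ring
    _ = 0 := by
        rw [Finset.sum_range_sub (fun t => x (k₀ + t) i), sub_eq_zero]
        simpa using congrFun (hper 0) i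

theorem Traj.floor_eq_of_periodic_of_floor_le {G : SimpleGraph (Fin n)} (hG : G.Connected)
    (hW : W ∈ rowStochastic ℝ (Fin n)) (hpos : ∀ i j, G.Adj i j → 0 < W i j) (hx : Traj W x)
    {k₀ p : ℕ} (hp : 0 < p) (hper : Function.Periodic (fun t => x (k₀ + t)) p) {i j : Fin n}
    (hle : ∀ t, ⌊x (k₀ + t) j⌋ ≤ ⌊x (k₀ + t) i⌋) : ⌊x k₀ j⌋ = ⌊x k₀ i⌋ := by
  have hσ := hG.eq_of_sum_mul_sub_eq_zero (fun _ _ => nonneg_of_mem_rowStochastic hW) hpos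
    (hx.sum_mul_sub_sum_floor_eq_zero_of_periodic hW hper) j i
  refine (hle 0).antisymm (not_lt.1 fun hlt => hσ.not_lt ?_)
  exact_mod_cast Finset.sum_lt_sum (fun t _ => hle t) ⟨0, Finset.mem_range.2 hp, hlt⟩

end QuantizedStep

section Assumption1

variable {n : ℕ} {G : SimpleGraph (Fin n)} {W : Matrix (Fin n) (Fin n) ℝ}

theorem Assumption1.mem_rowStochastic (hW : Assumption1 G W) : W ∈ rowStochastic ℝ (Fin n) :=
  mem_rowStochastic_iff_sum.2 ⟨hW.2.1, hW.2.2.1⟩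

theorem Assumption1.isSymm (hW : Assumption1 G W) : W.IsSymm :=
  IsSymm.ext fun i j => hW.1 j i

theorem Assumption1.pos_of_adj (hW : Assumption1 G W) {i j : Fin n} (h : G.Adj i j) :
    0 < W i j :=
  (hW.2.2.2.2.2 i j h).2.1

theorem Assumption1.exists_rat_eq (hW : Assumption1 G W) (i j : Fin n) :
    ∃ q : ℚ, (q : ℝ) = W i j := by
  obtain ⟨-, -, hrow, -, hzero, hadj⟩ := hW
  have hoff : ∀ j, j ≠ i → W i j ∈ (Rat.castHom ℝ).range := fun j hji => by
    by_cases h : G.Adj i j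
    · exact (hadj i j h).1
    · exact ⟨0, by simp [hzero i j hji.symm h]⟩
  by_cases hji : j = i
  · subst hji
    have hdiag : W j j = 1 - ∑ l ∈ Finset.univ.erase j, W j l := by
      rw [← hrow j, ← Finset.add_sum_erase _ _ (Finset.mem_univ j)]
      ring
    rw [hdiag]
    exact sub_mem (one_mem _) (sum_mem fun l hl => hoff l (Finset.ne_of_mem_erase hl))
  · exact hoff j hji

theorem Assumption1.exists_forall_mem_zmultiples (hW : Assumption1 G W) :
    ∃ c : ℝ, ∀ i j, W i j ∈ AddSubgroup.zmultiples c :=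
  let ⟨c, hc⟩ := exists_forall_mem_zmultiples_of_rat (fun ij : Fin n × Fin n => W ij.1 ij.2)
    fun ij => hW.exists_rat_eq ij.1 ij.2
  ⟨c, fun i j => hc (i, j)⟩

end Assumption1

section UpperExcess

variable {n : ℕ} {W : Matrix (Fin n) (Fin n) ℝ} {γ : ℝ} {m : ℤ} {v : Fin n → ℝ}

noncomputable def upperThreshold (W : Matrix (Fin n) (Fin n) ℝ) (γ : ℝ) (m : ℤ) (i : Fin n) : ℝ :=
  m + 1 + alpha W γ i

/-- For `m = m(k)` and `v = x(k)` this is `X4(k) ∪ X5(k) ∪ X6(k)`. -/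
noncomputable def upperSet (W : Matrix (Fin n) (Fin n) ℝ) (γ : ℝ) (m : ℤ) (v : Fin n → ℝ) :
    Finset (Fin n) :=
  Finset.univ.filter fun i => upperThreshold W γ m i < v i

noncomputable def upperExcess (W : Matrix (Fin n) (Fin n) ℝ) (γ : ℝ) (m : ℤ)
    (v : Fin n → ℝ) : ℝ :=
  ∑ i, max (v i - upperThreshold W γ m i) 0

theorem mem_upperSet {i : Fin n} : i ∈ upperSet W γ m v ↔ upperThreshold W γ m i < v i := by
  simp [upperSet]

theorem upperExcess_eq_sum_upperSet :
    upperExcess W γ m v = ∑ i ∈ upperSet W γ m v, (v i - upperThreshold W γ m i) := by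
  rw [upperExcess, upperSet, Finset.sum_filter]
  refine Finset.sum_congr rfl fun i _ => ?_
  split_ifs with h
  · exact max_eq_left (by linarith)
  · exact max_eq_right (by linarith [not_lt.1 h])

theorem le_floor_of_upperThreshold_lt (hW : W ∈ rowStochastic ℝ (Fin n)) (hγ : 0 ≤ γ)
    {i : Fin n} {r : ℝ} (h : upperThreshold W γ m i < r) : m + 1 ≤ ⌊r⌋ := by
  have := le_one_of_mem_rowStochastic hW (i := i) (j := i)
  rw [Int.le_floor]
  simp only [upperThreshold, alpha] at h
  push_cast
  linarith

theorem floor_le_of_le_upperThreshold (hγ : 0 ≤ γ) {i : Fin n}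
    (hdiag : 1 / 2 - (1 - W i i) ≥ 2 * γ) {r : ℝ} (h : r ≤ upperThreshold W γ m i) :
    ⌊r⌋ ≤ m + 1 := by
  rw [Int.floor_le_iff]
  simp only [upperThreshold, alpha] at h
  push_cast
  linarith

theorem upperThreshold_add_le_of_lt (hW : W ∈ rowStochastic ℝ (Fin n)) (hγ : 0 ≤ γ) {i : Fin n}
    (hdiag : 1 / 2 - (1 - W i i) ≥ 2 * γ) {r : ℝ}
    (hgap : r - ⌊r⌋ > 1 - W i i → r - ⌊r⌋ - (1 - W i i) ≥ 2 * γ)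
    (h : upperThreshold W γ m i < r) :
    upperThreshold W γ m i + γ ≤ r + (1 - W i i) * (m + 1 - ⌊r⌋) := by
  rcases (le_floor_of_upperThreshold_lt hW hγ h).eq_or_lt with hfl | hfl
  · have hfl' : (⌊r⌋ : ℝ) = m + 1 := by exact_mod_cast hfl.symm
    simp only [upperThreshold, alpha, hfl'] at h hgap ⊢
    have := hgap (by linarith)
    linarith
  · have hfl' : (m : ℝ) + 2 ≤ ⌊r⌋ := by exact_mod_cast (show m + 2 ≤ ⌊r⌋ by omega)
    simp only [upperThreshold, alpha]
    nlinarith [Int.floor_le r, mul_nonneg (show 0 ≤ W i i by linarith)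
      (show 0 ≤ (⌊r⌋ : ℝ) - (m + 2) by linarith)]

theorem add_le_upperThreshold_of_le (hγ : 0 ≤ γ) {i : Fin n}
    (hdiag : 1 / 2 - (1 - W i i) ≥ 2 * γ) {r : ℝ}
    (hgap : r - ⌊r⌋ > 1 - W i i → r - ⌊r⌋ - (1 - W i i) ≥ 2 * γ)
    (h : r ≤ upperThreshold W γ m i) :
    r + (1 - W i i) * (m + 1 - ⌊r⌋) + γ ≤ upperThreshold W γ m i := by
  rcases (floor_le_of_le_upperThreshold hγ hdiag h).eq_or_lt with hfl | hfl
  · have hfl' : (⌊r⌋ : ℝ) = m + 1 := by exact_mod_cast hfl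
    simp only [upperThreshold, alpha, hfl'] at h hgap ⊢
    by_contra hcon
    have := hgap (by linarith)
    linarith
  · have hfl' : (⌊r⌋ : ℝ) ≤ m := by exact_mod_cast Int.lt_add_one_iff.1 hfl
    simp only [upperThreshold, alpha]
    nlinarith [Int.lt_floor_add_one r, mul_nonneg (show 0 ≤ W i i by linarith)
      (show 0 ≤ (m : ℝ) - ⌊r⌋ by linarith)]

theorem upperThreshold_add_le_quantStep (hW : W ∈ rowStochastic ℝ (Fin n)) (hγ : 0 ≤ γ)
    {i : Fin n} (hdiag : 1 / 2 - (1 - W i i) ≥ 2 * γ)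
    (hgap : v i - ⌊v i⌋ > 1 - W i i → v i - ⌊v i⌋ - (1 - W i i) ≥ 2 * γ)
    (hi : i ∈ upperSet W γ m v) :
    upperThreshold W γ m i + γ
      ≤ quantStep W v i + ∑ l ∈ (upperSet W γ m v)ᶜ, W i l * ((m : ℝ) + 1 - ⌊v l⌋) := by
  have hS : ∀ l ∈ upperSet W γ m v, (m : ℝ) + 1 ≤ ⌊v l⌋ := fun l hl => by
    exact_mod_cast le_floor_of_upperThreshold_lt hW hγ (mem_upperSet.1 hl)
  have h₁ := le_sum_mul_sub (fun l => nonneg_of_mem_rowStochastic hW)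
    (sum_row_of_mem_rowStochastic hW i) hS hi
  have h₂ := upperThreshold_add_le_of_lt hW hγ hdiag hgap (mem_upperSet.1 hi)
  rw [quantStep_apply_eq_add_sum hW]
  linarith

theorem quantStep_add_le_upperThreshold (hW : W ∈ rowStochastic ℝ (Fin n)) (hγ : 0 ≤ γ)
    (hdiag : ∀ i, 1 / 2 - (1 - W i i) ≥ 2 * γ) {i : Fin n}
    (hgap : v i - ⌊v i⌋ > 1 - W i i → v i - ⌊v i⌋ - (1 - W i i) ≥ 2 * γ)
    (hi : i ∉ upperSet W γ m v) :
    quantStep W v i + γ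
      ≤ upperThreshold W γ m i + ∑ l ∈ upperSet W γ m v, W i l * ((⌊v l⌋ : ℝ) - (m + 1)) := by
  have hS : ∀ l ∈ (upperSet W γ m v)ᶜ, (⌊v l⌋ : ℝ) ≤ m + 1 := fun l hl => by
    rw [Finset.mem_compl, mem_upperSet, not_lt] at hl
    exact_mod_cast floor_le_of_le_upperThreshold hγ (hdiag l) hl
  have h₁ := sum_mul_sub_le (fun l => nonneg_of_mem_rowStochastic hW)
    (sum_row_of_mem_rowStochastic hW i) hS (Finset.mem_compl.2 hi)
  rw [compl_compl] at h₁
  have h₂ := add_le_upperThreshold_of_le hγ (hdiag i) hgap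
    (not_lt.1 (mt mem_upperSet.2 hi))
  rw [quantStep_apply_eq_add_sum hW]
  linarith

/-- The Lyapunov step: the symmetric flow out of the upper set pays for the excess lost inside it
and gained outside it, with a margin of at least `γ` at every node that enters or leaves it. -/
theorem exists_slack_upperExcess_quantStep (hW : W ∈ rowStochastic ℝ (Fin n)) (hsymm : W.IsSymm)
    (hγ : 0 ≤ γ) (hdiag : ∀ i, 1 / 2 - (1 - W i i) ≥ 2 * γ)
    (hgap : ∀ i, v i - ⌊v i⌋ > 1 - W i i → v i - ⌊v i⌋ - (1 - W i i) ≥ 2 * γ) :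
    ∃ s : Fin n → ℝ, (∀ i, 0 ≤ s i) ∧
      (∀ i, ¬(i ∈ upperSet W γ m v ↔ i ∈ upperSet W γ m (quantStep W v)) → γ ≤ s i) ∧
      upperExcess W γ m (quantStep W v) + ∑ i, s i = upperExcess W γ m v := by
  classical
  set A := upperSet W γ m v
  set θ := upperThreshold W γ m
  set v' := quantStep W v
  set a : Fin n → ℝ := fun i => ∑ l ∈ Aᶜ, W i l * ((m : ℝ) + 1 - ⌊v l⌋)
  set b : Fin n → ℝ := fun i => ∑ l ∈ A, W i l * ((⌊v l⌋ : ℝ) - (m + 1))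
  have ha : ∀ i, 0 ≤ a i := fun i => Finset.sum_nonneg fun l hl => by
    rw [Finset.mem_compl, mem_upperSet, not_lt] at hl
    have : (⌊v l⌋ : ℝ) ≤ m + 1 := by exact_mod_cast floor_le_of_le_upperThreshold hγ (hdiag l) hl
    exact mul_nonneg (nonneg_of_mem_rowStochastic hW) (by linarith)
  have hb : ∀ i, 0 ≤ b i := fun i => Finset.sum_nonneg fun l hl => by
    have : (m : ℝ) + 1 ≤ ⌊v l⌋ := by
      exact_mod_cast le_floor_of_upperThreshold_lt hW hγ (mem_upperSet.1 hl)
    exact mul_nonneg (nonneg_of_mem_rowStochastic hW) (by linarith)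
  have hin : ∀ i ∈ A, θ i + γ ≤ v' i + a i := fun i hi =>
    upperThreshold_add_le_quantStep hW hγ (hdiag i) (hgap i) hi
  have hout : ∀ i ∉ A, v' i + γ ≤ θ i + b i := fun i hi =>
    quantStep_add_le_upperThreshold hW hγ hdiag (hgap i) hi
  have hflow : ∑ i ∈ A, (v' i - v i) = -(∑ i ∈ A, a i + ∑ i ∈ Aᶜ, b i) := by
    simp only [v', quantStep_apply_eq_add_sum hW, add_sub_cancel_left]
    exact hsymm.sum_sum_mul_sub A _ (m + 1)
  refine ⟨fun i => (if i ∈ A then v' i - θ i + a i else b i) - max (v' i - θ i) 0,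
    fun i => ?_, fun i hcross => ?_, ?_⟩
  · dsimp only
    split_ifs with h
    · exact sub_nonneg.2 (max_le (by linarith [ha i]) (by linarith [hin i h]))
    · exact sub_nonneg.2 (max_le (by linarith [hout i h]) (hb i))
  · dsimp only
    replace hcross : ¬(i ∈ A ↔ θ i < v' i) := by rwa [mem_upperSet (v := v')] at hcross
    split_ifs with h
    · rw [max_eq_right (by simp only [h, true_iff, not_lt] at hcross; linarith)]
      linarith [hin i h]
    · rw [max_eq_left (by simp only [h, false_iff, not_not] at hcross; linarith)]
      linarith [hout i h]
  · have hs : ∑ i, (if i ∈ A then v' i - θ i + a i else b i)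
        = ∑ i ∈ A, (v' i - θ i + a i) + ∑ i ∈ Aᶜ, b i := by
      rw [← Finset.sum_add_sum_compl A]
      congr 1 <;> refine Finset.sum_congr rfl fun i hi => ?_
      · rw [if_pos hi]
      · rw [if_neg (Finset.mem_compl.1 hi)]
    have hsplit : ∑ i ∈ A, (v i - θ i) = ∑ i ∈ A, (v' i - θ i) - ∑ i ∈ A, (v' i - v i) := by
      rw [← Finset.sum_sub_distrib]
      exact Finset.sum_congr rfl fun i _ => by ring
    rw [upperExcess_eq_sum_upperSet (v := v), upperExcess, Finset.sum_sub_distrib, hs,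
      Finset.sum_add_distrib, hsplit, hflow]
    ring

theorem upperExcess_quantStep_le (hW : W ∈ rowStochastic ℝ (Fin n)) (hsymm : W.IsSymm)
    (hγ : 0 ≤ γ) (hdiag : ∀ i, 1 / 2 - (1 - W i i) ≥ 2 * γ)
    (hgap : ∀ i, v i - ⌊v i⌋ > 1 - W i i → v i - ⌊v i⌋ - (1 - W i i) ≥ 2 * γ) :
    upperExcess W γ m (quantStep W v) ≤ upperExcess W γ m v := by
  obtain ⟨s, hs, -, hsum⟩ := exists_slack_upperExcess_quantStep (m := m) hW hsymm hγ hdiag hgap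
  linarith [Finset.sum_nonneg fun i (_ : i ∈ Finset.univ) => hs i]

theorem upperSet_quantStep_eq_of_upperExcess_eq (hW : W ∈ rowStochastic ℝ (Fin n))
    (hsymm : W.IsSymm) (hγ : 0 < γ) (hdiag : ∀ i, 1 / 2 - (1 - W i i) ≥ 2 * γ)
    (hgap : ∀ i, v i - ⌊v i⌋ > 1 - W i i → v i - ⌊v i⌋ - (1 - W i i) ≥ 2 * γ)
    (heq : upperExcess W γ m (quantStep W v) = upperExcess W γ m v) :
    upperSet W γ m (quantStep W v) = upperSet W γ m v := by
  obtain ⟨s, hs, hcross, hsum⟩ := exists_slack_upperExcess_quantStep hW hsymm hγ.le hdiag hgap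
  ext i
  by_contra h
  linarith [hcross i fun h' => h h'.symm,
    Finset.single_le_sum (fun j _ => hs j) (Finset.mem_univ i)]

variable {x : ℕ → Fin n → ℝ}

theorem Traj.antitone_upperExcess (hW : W ∈ rowStochastic ℝ (Fin n)) (hsymm : W.IsSymm)
    (hx : Traj W x) (hγ : GammaSetup W x γ) (m : ℤ) :
    Antitone fun k => upperExcess W γ m (x k) :=
  antitone_nat_of_succ_le fun k => by
    rw [hx.succ]
    exact upperExcess_quantStep_le hW hsymm hγ.1.le (fun i => (hγ.2 i k).2.2.2)
      (fun i => (hγ.2 i k).1)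

theorem Traj.upperSet_eq_of_periodic (hW : W ∈ rowStochastic ℝ (Fin n)) (hsymm : W.IsSymm)
    (hx : Traj W x) (hγ : GammaSetup W x γ) {k₀ p : ℕ} (hp : 0 < p)
    (hper : Function.Periodic (fun t => x (k₀ + t)) p) (m : ℤ) (t : ℕ) :
    upperSet W γ m (x (k₀ + t)) = upperSet W γ m (x k₀) := by
  have hconst : ∀ k, k₀ ≤ k → upperExcess W γ m (x k) = upperExcess W γ m (x k₀) :=
    fun k hk => (hx.antitone_upperExcess hW hsymm hγ m).dual_right.eq_of_periodic_tail hp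
      (hper.comp fun v => OrderDual.toDual (upperExcess W γ m v)) hk
  induction t with
  | zero => rfl
  | succ t ih =>
    rw [← add_assoc, hx.succ, upperSet_quantStep_eq_of_upperExcess_eq hW hsymm hγ.1
      (fun j => (hγ.2 j 0).2.2.2) (fun j => (hγ.2 j (k₀ + t)).1), ih]
    rw [← hx.succ, hconst (k₀ + t + 1) (by omega), hconst (k₀ + t) (by omega)]

theorem Traj.upperSet_mfun_eq_empty_of_periodic {G : SimpleGraph (Fin n)} (hG : G.Connected)
    (hW : W ∈ rowStochastic ℝ (Fin n)) (hsymm : W.IsSymm) (hpos : ∀ i j, G.Adj i j → 0 < W i j)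
    (hx : Traj W x) (hγ : GammaSetup W x γ) (hn : 0 < n) {k₀ p : ℕ} (hp : 0 < p)
    (hper : Function.Periodic (fun t => x (k₀ + t)) p) :
    upperSet W γ (mfun hn x k₀) (x k₀) = ∅ := by
  set m := mfun hn x k₀
  refine Finset.eq_empty_of_forall_notMem fun i hi => ?_
  obtain ⟨j, -, hj⟩ := Finset.exists_mem_eq_inf' ⟨⟨0, hn⟩, Finset.mem_univ _⟩ fun i => ⌊x k₀ i⌋
  have hj' : m = ⌊x k₀ j⌋ := hj
  have hjA : j ∉ upperSet W γ m (x k₀) := by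
    have hm : (m : ℝ) = ⌊x k₀ j⌋ := by exact_mod_cast hj'
    have := le_one_of_mem_rowStochastic hW (i := j) (j := j)
    rw [mem_upperSet, upperThreshold, alpha, not_lt]
    linarith [Int.lt_floor_add_one (x k₀ j), hγ.1]
  have hinv := hx.upperSet_eq_of_periodic hW hsymm hγ hp hper m
  -- `j` stays outside the upper set and `i` inside it, so `i` is never below `j` in floor
  have hfloor := hx.floor_eq_of_periodic_of_floor_le hG hW hpos hp hper fun t =>
    (floor_le_of_le_upperThreshold hγ.1.le ((hγ.2 j 0).2.2.2)
      (not_lt.1 (mt mem_upperSet.2 (hinv t ▸ hjA)))).trans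
    (le_floor_of_upperThreshold_lt hW hγ.1.le (mem_upperSet.1 (hinv t ▸ hi)))
  have := le_floor_of_upperThreshold_lt hW hγ.1.le (mem_upperSet.1 hi)
  omega

end UpperExcess

/-- Proposition 2: the upper sets `X4 ∪ X5 ∪ X6` empty in finite time. -/
theorem upper_sets_empty {n : ℕ} (hn : 1 < n)
    (G : SimpleGraph (Fin n)) (hG : G.Connected)
    (W : Matrix (Fin n) (Fin n) ℝ) (hW : Assumption1 G W)
    (x : ℕ → Fin n → ℝ) (hx : Traj W x)
    (γ : ℝ) (hγ : GammaSetup W x γ) :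
    ∃ K : ℕ, ∀ k, K ≤ k →
      ∀ i, x k i ≤ (mfun (Nat.zero_lt_one.trans hn) x k : ℝ) + 1 + alpha W γ i := by
  have hn₀ : 0 < n := Nat.zero_lt_one.trans hn
  have hstoch := hW.mem_rowStochastic
  obtain ⟨c, hc⟩ := hW.exists_forall_mem_zmultiples
  obtain ⟨k₀, p, hp, hper⟩ := exists_periodic_tail hx.succ (hx.finite_range hstoch hc)
  have hempty := hx.upperSet_mfun_eq_empty_of_periodic hG hstoch hW.isSymm
    (fun _ _ => hW.pos_of_adj) hγ hn₀ hp hper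
  refine ⟨k₀, fun k hk i => ?_⟩
  obtain ⟨t, rfl⟩ := Nat.exists_eq_add_of_le hk
  have hi : i ∉ upperSet W γ (mfun hn₀ x (k₀ + t)) (x (k₀ + t)) := by
    rw [hx.mfun_eq_of_periodic hstoch hn₀ hp hper hk,
      hx.upperSet_eq_of_periodic hstoch hW.isSymm hγ hp hper, hempty]
    exact Finset.notMem_empty i
  exact not_lt.1 (mt mem_upperSet.2 hi)
end

section
/- Proposition 3 (either X1 or X3 empties in finite time): under Assumption 1 and the γ/α setup, for every initial vector x(0) ∈ ℝ^n there exists a finite time K such that for all k ≥ K, either (a) x_i(k) < m(k) + 1 for every agent i (i.e. X3(k) ∪ X4(k) ∪ X5(k) ∪ X6(k) = ∅, all nodes lie in X1 ∪ X2), or (b) m(k) + 1 − α_i ≤ x_i(k) ≤ m(k) + 1 + α_i for every agent i (i.e. X1(k) ∪ X4(k) ∪ X5(k) ∪ X6(k) = ∅, all nodes lie in X2 ∪ X3). -/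
open Finset Filter

/-!
The weights are rational and the floors stay between `m(0)` and `M(0)`, so the trajectory lives
on a finite piece of the lattice `x(0) + (1/d)ℤⁿ` and is eventually periodic. On a periodic tail
every quantity that is monotone in time is constant: `m`, `M`, every `xᵢ` whose floor inflow has
a sign, and the total excess `Ψ = Σᵢ (xᵢ - (M - 1 + wᵢᵢ - γ))⁺` of the top layer
`xᵢ ≥ M - 1 + wᵢᵢ`. The gap conditions bound the change of each summand of `Ψ` by the inflow of the
floors clamped below at `M - 1`, and these inflows sum to zero, so `Ψ` never increases. Its
constancy freezes the top layer and puts both ends of every edge leaving it on floor `M - 1`; the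
property "floor at most `M - 1` forever" then spreads from any node outside the layer over the
connected graph, contradicting the maximum `M`. Hence all nodes lie in the top layer and
`M ≤ m + 1`. For `M = m` this is case (a). For `M = m + 1` the top layer gives the lower bound of
case (b), and the upper bound `xᵢ ≤ M + αᵢ` holds because a node violating it would stay on
floor `M` forever and pin its neighbours there, forcing `m = M`.
-/

open Matrix

section EventuallyPeriodic

variable {α : Type*} {f : ℕ → α} {k₀ p : ℕ}

theorem apply_add_mul_of_periodic (hper : ∀ k ≥ k₀, f (k + p) = f k) {k : ℕ} (hk : k₀ ≤ k)
    (t : ℕ) : f (k + t * p) = f k := by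
  induction t with
  | zero => simp
  | succ t ih => rw [add_one_mul, ← add_assoc, hper _ (by omega), ih]

theorem forall_of_periodic_of_invariant (hp : 0 < p) (hper : ∀ k ≥ k₀, f (k + p) = f k)
    {P : α → Prop} (hP : ∀ k ≥ k₀, P (f k) → P (f (k + 1))) {k : ℕ} (hk : k₀ ≤ k)
    (hk' : P (f k)) {t : ℕ} (ht : k₀ ≤ t) : P (f t) := by
  have hfwd : ∀ s ≥ k, P (f s) := fun s hs => by
    induction s, hs using Nat.le_induction with
    | base => exact hk'
    | succ s hs ih => exact hP s (hk.trans hs) ih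
  rw [← apply_add_mul_of_periodic hper ht k]
  exact hfwd _ (by nlinarith)

theorem eq_of_le_succ_of_periodic [PartialOrder α] (hp : 0 < p)
    (hper : ∀ k ≥ k₀, f (k + p) = f k) (hf : ∀ k ≥ k₀, f k ≤ f (k + 1)) {k : ℕ}
    (hk : k₀ ≤ k) : f k = f k₀ := by
  have hmono := monotoneOn_nat_Ici_of_le_succ hf
  refine le_antisymm ?_ (hmono (le_refl k₀) hk hk)
  calc f k ≤ f (k₀ + k * p) := hmono hk (by simp) (by nlinarith)
    _ = f k₀ := apply_add_mul_of_periodic hper le_rfl k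

theorem eq_of_succ_le_of_periodic [PartialOrder α] (hp : 0 < p)
    (hper : ∀ k ≥ k₀, f (k + p) = f k) (hf : ∀ k ≥ k₀, f (k + 1) ≤ f k) {k : ℕ}
    (hk : k₀ ≤ k) : f k = f k₀ :=
  eq_of_le_succ_of_periodic (α := αᵒᵈ) hp hper hf hk

end EventuallyPeriodic

theorem exists_common_denominator {ι : Type*} (s : Finset ι) (r : ι → ℝ)
    (hr : ∀ a ∈ s, ∃ q : ℚ, (q : ℝ) = r a) :
    ∃ d : ℕ, 0 < d ∧ ∀ a ∈ s, ∃ z : ℤ, r a * d = z := by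
  classical
  induction s using Finset.induction_on with
  | empty => exact ⟨1, one_pos, by simp⟩
  | insert b s hb ih =>
    obtain ⟨d, hd, hs⟩ := ih fun a ha => hr a (Finset.mem_insert_of_mem ha)
    obtain ⟨q, hq⟩ := hr b (Finset.mem_insert_self b s)
    refine ⟨d * q.den, Nat.mul_pos hd q.den_pos, fun a ha => ?_⟩
    rcases Finset.mem_insert.1 ha with rfl | ha
    · have hnum : (q : ℝ) * q.den = q.num := by exact_mod_cast Rat.mul_den_eq_num q
      refine ⟨q.num * d, ?_⟩
      rw [← hq]
      push_cast
      linear_combination (d : ℝ) * hnum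
    · obtain ⟨z, hz⟩ := hs a ha
      exact ⟨z * q.den, by push_cast; rw [← hz]; ring⟩

theorem SimpleGraph.Connected.forall_of_adj {V : Type*} {G : SimpleGraph V}
    (hG : G.Connected) {P : V → Prop} (hP : ∀ i j, G.Adj i j → P i → P j) {i₀ : V}
    (h₀ : P i₀) (i : V) : P i := by
  obtain ⟨w⟩ := hG.preconnected i₀ i
  induction w with
  | nil => exact h₀
  | cons h _ ih => exact ih (hP _ _ h h₀)

section Stochastic

variable {n : ℕ} {W : Matrix (Fin n) (Fin n) ℝ}

theorem sum_mul_le_of_mem_rowStochastic (hW : W ∈ rowStochastic ℝ (Fin n)) {f : Fin n → ℝ}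
    {B : ℝ} (hf : ∀ j, f j ≤ B) (i : Fin n) :
    ∑ j, W i j * f j ≤ W i i * f i + (1 - W i i) * B := by
  rw [← Finset.add_sum_erase _ _ (Finset.mem_univ i), ← sum_row_of_mem_rowStochastic hW i,
    ← Finset.add_sum_erase _ _ (Finset.mem_univ i), add_sub_cancel_left, Finset.sum_mul]
  gcongr with j
  exacts [nonneg_of_mem_rowStochastic hW, hf j]

theorem le_sum_mul_of_mem_rowStochastic (hW : W ∈ rowStochastic ℝ (Fin n)) {f : Fin n → ℝ}
    {B : ℝ} (hf : ∀ j, B ≤ f j) (i : Fin n) :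
    W i i * f i + (1 - W i i) * B ≤ ∑ j, W i j * f j := by
  have := sum_mul_le_of_mem_rowStochastic hW (f := -f) (B := -B) (fun j => neg_le_neg (hf j)) i
  simp only [Pi.neg_apply, mul_neg, Finset.sum_neg_distrib] at this
  linarith

end Stochastic

theorem floor_le_sub_one_of_lt_add {t w : ℝ} {M : ℤ} (hw : w ≤ 1) (h : t < M - 1 + w) :
    ⌊t⌋ ≤ M - 1 :=
  Int.le_sub_one_of_lt (Int.floor_lt.2 (by linarith))

theorem sub_one_le_floor_of_add_le {t w : ℝ} {M : ℤ} (hw : 0 ≤ w) (h : M - 1 + w ≤ t) :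
    M - 1 ≤ ⌊t⌋ :=
  Int.le_floor.2 (by push_cast; linarith)

section NetInflow

variable {n : ℕ} {W : Matrix (Fin n) (Fin n) ℝ}

def netInflow (W : Matrix (Fin n) (Fin n) ℝ) (f : Fin n → ℝ) (i : Fin n) : ℝ :=
  ∑ j, W i j * (f j - f i)

theorem sum_netInflow_eq_zero (hW : W.IsSymm) (f : Fin n → ℝ) :
    ∑ i, netInflow W f i = 0 := by
  have h : ∑ i, netInflow W f i = -∑ i, netInflow W f i := by
    unfold netInflow
    conv_lhs => rw [Finset.sum_comm]
    simp only [← Finset.sum_neg_distrib]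
    refine Finset.sum_congr rfl fun i _ => Finset.sum_congr rfl fun j _ => ?_
    rw [hW.apply i j]
    ring
  linarith

theorem netInflow_eq_sum_mul_sub (hW : W ∈ rowStochastic ℝ (Fin n)) (f : Fin n → ℝ)
    (i : Fin n) : netInflow W f i = ∑ j, W i j * f j - f i := by
  simp only [netInflow, mul_sub, Finset.sum_sub_distrib, ← Finset.sum_mul,
    sum_row_of_mem_rowStochastic hW i, one_mul]

theorem netInflow_const (c : ℝ) (i : Fin n) : netInflow W (fun _ => c) i = 0 := by
  simp [netInflow]

theorem netInflow_le_netInflow (hW : W ∈ rowStochastic ℝ (Fin n)) {f g : Fin n → ℝ}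
    {i : Fin n} (hfg : ∀ j, 0 < W i j → f j ≤ g j) (hi : f i = g i) :
    netInflow W f i ≤ netInflow W g i := by
  refine Finset.sum_le_sum fun j _ => ?_
  rcases (nonneg_of_mem_rowStochastic hW (i := i) (j := j)).eq_or_lt with h | h
  · simp [← h]
  · rw [hi]
    exact mul_le_mul_of_nonneg_left (by linarith [hfg j h]) h.le

theorem eq_of_netInflow_eq (hW : W ∈ rowStochastic ℝ (Fin n)) {f g : Fin n → ℝ}
    {i : Fin n} (hfg : ∀ j, 0 < W i j → f j ≤ g j) (hi : f i = g i)
    (heq : netInflow W f i = netInflow W g i) {j : Fin n} (hij : 0 < W i j) : f j = g j := by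
  have hterm : ∀ l ∈ Finset.univ, 0 ≤ W i l * (g l - g i) - W i l * (f l - f i) := by
    intro l _
    rcases (nonneg_of_mem_rowStochastic hW (i := i) (j := l)).eq_or_lt with h | h
    · simp [← h]
    · rw [hi, ← mul_sub]
      exact mul_nonneg h.le (by linarith [hfg l h])
  have hsum : ∑ l, (W i l * (g l - g i) - W i l * (f l - f i)) = 0 := by
    rw [Finset.sum_sub_distrib]
    exact sub_eq_zero.2 heq.symm
  have := (Finset.sum_eq_zero_iff_of_nonneg hterm).1 hsum j (Finset.mem_univ j)
  rw [hi, ← mul_sub] at this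
  linarith [(mul_eq_zero.1 this).resolve_left hij.ne']

end NetInflow

section Clamped

variable {n : ℕ} {W : Matrix (Fin n) (Fin n) ℝ} (hW : W ∈ rowStochastic ℝ (Fin n))
  {v : Fin n → ℝ} {M : ℤ} {i : Fin n}
include hW

theorem netInflow_floor_le_netInflow_max (hi : M - 1 ≤ ⌊v i⌋) :
    netInflow W (fun j => (⌊v j⌋ : ℝ)) i ≤ netInflow W (fun j => max (⌊v j⌋ : ℝ) (M - 1)) i :=
  netInflow_le_netInflow hW (fun _ _ => le_max_left _ _)
    (max_eq_left (by exact_mod_cast hi : (M : ℝ) - 1 ≤ ⌊v i⌋)).symm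

theorem le_floor_of_netInflow_floor_eq (hi : M - 1 ≤ ⌊v i⌋)
    (heq : netInflow W (fun j => (⌊v j⌋ : ℝ)) i =
      netInflow W (fun j => max (⌊v j⌋ : ℝ) (M - 1)) i) {j : Fin n} (hij : 0 < W i j) :
    M - 1 ≤ ⌊v j⌋ := by
  have := eq_of_netInflow_eq hW (fun _ _ => le_max_left _ _)
    (max_eq_left (by exact_mod_cast hi : (M : ℝ) - 1 ≤ ⌊v i⌋)).symm heq hij
  have h : (M : ℝ) - 1 ≤ ⌊v j⌋ := by
    rw [this]
    exact le_max_right _ _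
  exact_mod_cast h

theorem netInflow_max_nonneg (hi : ⌊v i⌋ ≤ M - 1) :
    0 ≤ netInflow W (fun j => max (⌊v j⌋ : ℝ) (M - 1)) i :=
  (netInflow_const _ i).symm.trans_le <| netInflow_le_netInflow hW (fun _ _ => le_max_right _ _)
    (max_eq_right (by exact_mod_cast hi : (⌊v i⌋ : ℝ) ≤ M - 1)).symm

theorem floor_le_of_netInflow_max_eq_zero (hi : ⌊v i⌋ ≤ M - 1)
    (heq : netInflow W (fun j => max (⌊v j⌋ : ℝ) (M - 1)) i = 0) {j : Fin n}
    (hij : 0 < W i j) : ⌊v j⌋ ≤ M - 1 := by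
  have := eq_of_netInflow_eq hW (f := fun _ => (M : ℝ) - 1)
    (g := fun j => max (⌊v j⌋ : ℝ) (M - 1)) (fun _ _ => le_max_right _ _)
    (max_eq_right (by exact_mod_cast hi : (⌊v i⌋ : ℝ) ≤ M - 1)).symm
    ((netInflow_const _ i).trans heq.symm) hij
  have h : (⌊v j⌋ : ℝ) ≤ M - 1 := by
    rw [this]
    exact le_max_left _ _
  exact_mod_cast h

theorem le_add_netInflow_max_floor (hM : ⌊v i⌋ ≤ M) (hi : M - 1 + W i i ≤ v i) :
    M - 1 + W i i ≤ v i + netInflow W (fun j => max (⌊v j⌋ : ℝ) (M - 1)) i := by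
  have hwi := nonneg_of_mem_rowStochastic hW (i := i) (j := i)
  have hfloor := sub_one_le_floor_of_add_le hwi hi
  have hmax : max (⌊v i⌋ : ℝ) (M - 1) = ⌊v i⌋ := max_eq_left (by exact_mod_cast hfloor)
  have hsum := le_sum_mul_of_mem_rowStochastic hW
    (f := fun j => max (⌊v j⌋ : ℝ) (M - 1)) (B := M - 1) (fun j => le_max_right _ _) i
  rw [netInflow_eq_sum_mul_sub hW]
  simp only [hmax] at hsum ⊢
  rcases hM.eq_or_lt with htop | hlow
  · have : (⌊v i⌋ : ℝ) = M := by exact_mod_cast htop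
    rw [this] at hsum ⊢
    linarith [Int.floor_le (v i)]
  · have : (⌊v i⌋ : ℝ) = M - 1 := by exact_mod_cast le_antisymm (by omega) hfloor
    rw [this] at hsum ⊢
    linarith

end Clamped

section Extrema

variable {n : ℕ} (hn : 0 < n) (x : ℕ → Fin n → ℝ) (k : ℕ)

theorem mfun_le_floor (i : Fin n) : mfun hn x k ≤ ⌊x k i⌋ :=
  Finset.inf'_le _ (Finset.mem_univ i)

theorem exists_floor_eq_mfun : ∃ i, ⌊x k i⌋ = mfun hn x k := by
  obtain ⟨i, -, h⟩ := Finset.exists_mem_eq_inf' ⟨⟨0, hn⟩, Finset.mem_univ _⟩ fun i => ⌊x k i⌋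
  exact ⟨i, h.symm⟩

theorem floor_le_Mfun (i : Fin n) : ⌊x k i⌋ ≤ Mfun hn x k :=
  Finset.le_sup' (fun i => ⌊x k i⌋) (Finset.mem_univ i)

theorem exists_floor_eq_Mfun : ∃ i, ⌊x k i⌋ = Mfun hn x k := by
  obtain ⟨i, -, h⟩ := Finset.exists_mem_eq_sup' ⟨⟨0, hn⟩, Finset.mem_univ _⟩ fun i => ⌊x k i⌋
  exact ⟨i, h.symm⟩

end Extrema

namespace Traj

variable {n : ℕ} {W : Matrix (Fin n) (Fin n) ℝ} {x : ℕ → Fin n → ℝ}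

theorem apply_succ (hx : Traj W x) (hW : W ∈ rowStochastic ℝ (Fin n)) (k : ℕ) (i : Fin n) :
    x (k + 1) i = x k i + netInflow W (fun j => (⌊x k j⌋ : ℝ)) i := by
  rw [netInflow_eq_sum_mul_sub hW, hx k i]
  ring

theorem succ_eq_succ (hx : Traj W x) {a b : ℕ} (h : x a = x b) : x (a + 1) = x (b + 1) := by
  funext i
  rw [hx, hx, h]

variable (hx : Traj W x) (hW : W ∈ rowStochastic ℝ (Fin n)) (hn : 0 < n)
include hx hW

theorem mfun_le_succ (k : ℕ) : mfun hn x k ≤ mfun hn x (k + 1) := by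
  refine Finset.le_inf' _ _ fun i _ => Int.le_floor.2 ?_
  have hle : W i i * ⌊x k i⌋ + (1 - W i i) * mfun hn x k ≤ ∑ j, W i j * ⌊x k j⌋ :=
    le_sum_mul_of_mem_rowStochastic hW (f := fun j => (⌊x k j⌋ : ℝ))
      (fun j => by exact_mod_cast mfun_le_floor hn x k j) i
  have hmi : (mfun hn x k : ℝ) ≤ ⌊x k i⌋ := by exact_mod_cast mfun_le_floor hn x k i
  have := mul_le_mul_of_nonneg_left hmi (nonneg_of_mem_rowStochastic hW (i := i) (j := i))
  rw [hx k i]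
  linarith [Int.floor_le (x k i)]

theorem Mfun_succ_le (k : ℕ) : Mfun hn x (k + 1) ≤ Mfun hn x k := by
  refine Finset.sup'_le _ _ fun i _ => Int.lt_add_one_iff.1 (Int.floor_lt.2 ?_)
  have hle : ∑ j, W i j * ⌊x k j⌋ ≤ W i i * ⌊x k i⌋ + (1 - W i i) * Mfun hn x k :=
    sum_mul_le_of_mem_rowStochastic hW (f := fun j => (⌊x k j⌋ : ℝ))
      (fun j => by exact_mod_cast floor_le_Mfun hn x k j) i
  have hiM : (⌊x k i⌋ : ℝ) ≤ Mfun hn x k := by exact_mod_cast floor_le_Mfun hn x k i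
  have := mul_le_mul_of_nonneg_left hiM (nonneg_of_mem_rowStochastic hW (i := i) (j := i))
  rw [hx k i]
  push_cast
  linarith [Int.lt_floor_add_one (x k i)]

theorem mem_Ico_mfun_Mfun_zero (k : ℕ) (i : Fin n) :
    x k i ∈ Set.Ico (mfun hn x 0 : ℝ) (Mfun hn x 0 + 1) := by
  have hm : mfun hn x 0 ≤ mfun hn x k := monotone_nat_of_le_succ (hx.mfun_le_succ hW hn) k.zero_le
  have hM : Mfun hn x k ≤ Mfun hn x 0 := antitone_nat_of_succ_le (hx.Mfun_succ_le hW hn) k.zero_le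
  have h₁ : (mfun hn x k : ℝ) ≤ ⌊x k i⌋ := by exact_mod_cast mfun_le_floor hn x k i
  have h₂ : (⌊x k i⌋ : ℝ) ≤ Mfun hn x k := by exact_mod_cast floor_le_Mfun hn x k i
  have h₃ : (mfun hn x 0 : ℝ) ≤ mfun hn x k := by exact_mod_cast hm
  have h₄ : (Mfun hn x k : ℝ) ≤ Mfun hn x 0 := by exact_mod_cast hM
  constructor <;> linarith [Int.floor_le (x k i), Int.lt_floor_add_one (x k i)]

end Traj

namespace Traj

variable {n : ℕ} {W : Matrix (Fin n) (Fin n) ℝ} {x : ℕ → Fin n → ℝ}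
  (hx : Traj W x) (hW : W ∈ rowStochastic ℝ (Fin n))
include hx hW

theorem exists_sub_mul_eq_intCast {d : ℕ} (hd : ∀ i j, i ≠ j → ∃ z : ℤ, W i j * d = z)
    (k : ℕ) (i : Fin n) : ∃ z : ℤ, (x k i - x 0 i) * d = z := by
  induction k generalizing i with
  | zero => exact ⟨0, by simp⟩
  | succ k ih =>
    have hterm : ∀ j, ∃ z : ℤ, W i j * ((⌊x k j⌋ : ℝ) - ⌊x k i⌋) * d = z := fun j => by
      rcases eq_or_ne i j with rfl | hij
      · exact ⟨0, by simp⟩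
      · obtain ⟨z, hz⟩ := hd i j hij
        exact ⟨z * (⌊x k j⌋ - ⌊x k i⌋), by push_cast; rw [← hz]; ring⟩
    choose z hz using hterm
    obtain ⟨z₀, hz₀⟩ := ih i
    refine ⟨z₀ + ∑ j, z j, ?_⟩
    rw [hx.apply_succ hW, netInflow, add_sub_right_comm, add_mul, Finset.sum_mul,
      Finset.sum_congr rfl fun j _ => hz j, hz₀]
    push_cast
    ring

theorem finite_range_s14 (hn : 0 < n) (hrat : ∀ i j, i ≠ j → ∃ q : ℚ, (q : ℝ) = W i j) :
    (Set.range x).Finite := by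
  obtain ⟨d, hd, hdW⟩ := exists_common_denominator Finset.univ.offDiag (fun e => W e.1 e.2)
    fun e he => hrat e.1 e.2 (Finset.mem_offDiag.1 he).2.2
  have hd' : ∀ i j, i ≠ j → ∃ z : ℤ, W i j * d = z := fun i j hij =>
    hdW (i, j) (Finset.mem_offDiag.2 ⟨Finset.mem_univ _, Finset.mem_univ _, hij⟩)
  let lo : Fin n → ℤ := fun i => ⌈(mfun hn x 0 - x 0 i) * d⌉
  let hi : Fin n → ℤ := fun i => ⌊(Mfun hn x 0 + 1 - x 0 i) * d⌋
  refine ((Set.Finite.pi' fun i => Set.finite_Icc (lo i) (hi i)).image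
    fun (z : Fin n → ℤ) i => x 0 i + z i / d).subset ?_
  rintro _ ⟨k, rfl⟩
  choose z hz using hx.exists_sub_mul_eq_intCast hW hd' k
  refine ⟨z, fun i => ⟨?_, ?_⟩, funext fun i => ?_⟩
  · obtain ⟨h, -⟩ := hx.mem_Ico_mfun_Mfun_zero hW hn k i
    rw [Int.ceil_le, ← hz]
    gcongr
  · obtain ⟨-, h⟩ := hx.mem_Ico_mfun_Mfun_zero hW hn k i
    rw [Int.le_floor, ← hz]
    gcongr
  · simp only [← hz]
    field_simp
    ring

theorem exists_periodic (hn : 0 < n) (hrat : ∀ i j, i ≠ j → ∃ q : ℚ, (q : ℝ) = W i j) :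
    ∃ k₀ p : ℕ, 0 < p ∧ ∀ k ≥ k₀, x (k + p) = x k := by
  obtain ⟨a, b, hab, heq⟩ :=
    (hx.finite_range_s14 hW hn hrat).exists_lt_map_eq_of_forall_mem (f := x) (t := Set.range x)
      fun k => ⟨k, rfl⟩
  refine ⟨a, b - a, by omega, fun k hk => ?_⟩
  induction k, hk using Nat.le_induction with
  | base => rw [Nat.add_sub_cancel' hab.le, heq]
  | succ k hk ih =>
    rw [show k + 1 + (b - a) = k + (b - a) + 1 by omega]
    exact hx.succ_eq_succ ih

end Traj

namespace Traj

variable {n : ℕ} {W : Matrix (Fin n) (Fin n) ℝ} {x : ℕ → Fin n → ℝ} {k₀ p : ℕ}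
  (hx : Traj W x) (hW : W ∈ rowStochastic ℝ (Fin n)) (hp : 0 < p)
  (hper : ∀ k ≥ k₀, x (k + p) = x k)
include hx hW hp hper

theorem mfun_eq_of_periodic_s14 (hn : 0 < n) {k : ℕ} (hk : k₀ ≤ k) :
    mfun hn x k = mfun hn x k₀ :=
  eq_of_le_succ_of_periodic hp (fun k hk => by simp only [mfun, hper k hk])
    (fun k _ => hx.mfun_le_succ hW hn k) hk

theorem Mfun_eq_of_periodic (hn : 0 < n) {k : ℕ} (hk : k₀ ≤ k) :
    Mfun hn x k = Mfun hn x k₀ :=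
  eq_of_succ_le_of_periodic hp (fun k hk => by simp only [Mfun, hper k hk])
    (fun k _ => hx.Mfun_succ_le hW hn k) hk

theorem floor_le_Mfun_of_periodic (hn : 0 < n) {k : ℕ} (hk : k₀ ≤ k) (j : Fin n) :
    ⌊x k j⌋ ≤ Mfun hn x k₀ :=
  (floor_le_Mfun hn x k j).trans_eq (hx.Mfun_eq_of_periodic hW hp hper hn hk)

theorem netInflow_floor_eq_zero_of_periodic {i : Fin n}
    (hsign : (∀ k ≥ k₀, 0 ≤ netInflow W (fun j => (⌊x k j⌋ : ℝ)) i) ∨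
      ∀ k ≥ k₀, netInflow W (fun j => (⌊x k j⌋ : ℝ)) i ≤ 0) {k : ℕ} (hk : k₀ ≤ k) :
    netInflow W (fun j => (⌊x k j⌋ : ℝ)) i = 0 := by
  have hper' : ∀ k ≥ k₀, x (k + p) i = x k i := fun k hk => by rw [hper k hk]
  have hconst : x (k + 1) i = x k i := by
    rcases hsign with h | h
    · have hmono : ∀ k ≥ k₀, x k i ≤ x (k + 1) i := fun k hk => by
        linarith [hx.apply_succ hW k i, h k hk]
      rw [eq_of_le_succ_of_periodic (f := fun k => x k i) hp hper' hmono hk,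
        eq_of_le_succ_of_periodic (f := fun k => x k i) hp hper' hmono (hk.trans k.le_succ)]
    · have hanti : ∀ k ≥ k₀, x (k + 1) i ≤ x k i := fun k hk => by
        linarith [hx.apply_succ hW k i, h k hk]
      rw [eq_of_succ_le_of_periodic (f := fun k => x k i) hp hper' hanti hk,
        eq_of_succ_le_of_periodic (f := fun k => x k i) hp hper' hanti (hk.trans k.le_succ)]
  linarith [hx.apply_succ hW k i]

theorem floor_eq_of_floor_le_of_periodic {i : Fin n}
    (hle : ∀ k ≥ k₀, ∀ j, 0 < W i j → ⌊x k i⌋ ≤ ⌊x k j⌋) {k : ℕ} (hk : k₀ ≤ k) {j : Fin n}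
    (hij : 0 < W i j) : ⌊x k j⌋ = ⌊x k i⌋ := by
  have hmono : ∀ k ≥ k₀, netInflow W (fun _ => (⌊x k i⌋ : ℝ)) i ≤
      netInflow W (fun j => (⌊x k j⌋ : ℝ)) i := fun k hk =>
    netInflow_le_netInflow hW (fun j hj => by exact_mod_cast hle k hk j hj) rfl
  have heq := hx.netInflow_floor_eq_zero_of_periodic hW hp hper
    (.inl fun k hk => (netInflow_const _ i).symm.trans_le (hmono k hk)) hk
  exact_mod_cast (eq_of_netInflow_eq (f := fun _ => (⌊x k i⌋ : ℝ))
    (g := fun j => (⌊x k j⌋ : ℝ)) hW (fun j hj => by exact_mod_cast hle k hk j hj) rfl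
    ((netInflow_const _ i).trans heq.symm) hij).symm

theorem floor_eq_of_le_floor_of_periodic {i : Fin n}
    (hle : ∀ k ≥ k₀, ∀ j, 0 < W i j → ⌊x k j⌋ ≤ ⌊x k i⌋) {k : ℕ} (hk : k₀ ≤ k) {j : Fin n}
    (hij : 0 < W i j) : ⌊x k j⌋ = ⌊x k i⌋ := by
  have hmono : ∀ k ≥ k₀, netInflow W (fun j => (⌊x k j⌋ : ℝ)) i ≤
      netInflow W (fun _ => (⌊x k i⌋ : ℝ)) i := fun k hk =>
    netInflow_le_netInflow hW (fun j hj => by exact_mod_cast hle k hk j hj) rfl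
  have heq := hx.netInflow_floor_eq_zero_of_periodic hW hp hper
    (.inr fun k hk => (hmono k hk).trans_eq (netInflow_const _ i)) hk
  exact_mod_cast eq_of_netInflow_eq (f := fun j => (⌊x k j⌋ : ℝ))
    (g := fun _ => (⌊x k i⌋ : ℝ)) hW (fun j hj => by exact_mod_cast hle k hk j hj) rfl
    (heq.trans (netInflow_const _ i).symm) hij

end Traj

section GapConditions

variable {n : ℕ} {W : Matrix (Fin n) (Fin n) ℝ} {x : ℕ → Fin n → ℝ} {γ : ℝ}

theorem GammaSetup.le_sub_two_mul_of_lt (hγ : GammaSetup W x γ)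
    (hW : W ∈ rowStochastic ℝ (Fin n)) {k : ℕ} {i : Fin n} {M : ℤ}
    (h : x k i < M - 1 + W i i) : x k i ≤ M - 1 + W i i - 2 * γ := by
  have hfloor := floor_le_sub_one_of_lt_add (le_one_of_mem_rowStochastic hW) h
  obtain ⟨-, hgap, -, hw⟩ := hγ.2 i k
  rcases hfloor.eq_or_lt with hM | hM
  · have hM' : (⌊x k i⌋ : ℝ) = M - 1 := by exact_mod_cast hM
    linarith [hgap (by linarith)]
  · have : ⌊x k i⌋ ≤ M - 2 := by omega
    have : (⌊x k i⌋ : ℝ) ≤ M - 2 := by exact_mod_cast this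
    linarith [Int.lt_floor_add_one (x k i)]

theorem Traj.apply_succ_le_of_lt (hx : Traj W x) (hW : W ∈ rowStochastic ℝ (Fin n))
    (hγ : GammaSetup W x γ) {k : ℕ} {M : ℤ} {i : Fin n} (hi : x k i < M - 1 + W i i) :
    x (k + 1) i ≤ M - 1 + W i i - 2 * γ + netInflow W (fun j => max (⌊x k j⌋ : ℝ) (M - 1)) i := by
  have hfloor := floor_le_sub_one_of_lt_add (le_one_of_mem_rowStochastic hW) hi
  have hmax : max (⌊x k i⌋ : ℝ) (M - 1) = M - 1 := max_eq_right (by exact_mod_cast hfloor)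
  have hdrift : netInflow W (fun j => (⌊x k j⌋ : ℝ)) i ≤
      netInflow W (fun j => max (⌊x k j⌋ : ℝ) (M - 1)) i + (1 - W i i) * (M - 1 - ⌊x k i⌋) := by
    have := sum_mul_le_of_mem_rowStochastic hW
      (f := fun j => (⌊x k j⌋ : ℝ) - max (⌊x k j⌋ : ℝ) (M - 1)) (B := 0)
      (fun j => sub_nonpos.2 (le_max_left _ _)) i
    simp only [hmax, mul_sub, Finset.sum_sub_distrib, mul_zero, add_zero] at this
    rw [netInflow_eq_sum_mul_sub hW, netInflow_eq_sum_mul_sub hW, hmax]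
    linarith
  obtain ⟨-, -, hfract, hw⟩ := hγ.2 i k
  rw [hx.apply_succ hW]
  rcases hfloor.eq_or_lt with hM' | hM'
  · have : (⌊x k i⌋ : ℝ) = M - 1 := by exact_mod_cast hM'
    rw [this] at hdrift
    linarith [hγ.le_sub_two_mul_of_lt hW hi]
  · have : ⌊x k i⌋ ≤ M - 2 := by omega
    have : (1 : ℝ) ≤ M - 1 - ⌊x k i⌋ := by
      have : (⌊x k i⌋ : ℝ) ≤ M - 2 := by exact_mod_cast this
      linarith
    nlinarith [mul_le_mul_of_nonneg_left this (nonneg_of_mem_rowStochastic hW (i := i) (j := i)),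
      hγ.1]

end GapConditions

namespace Traj

variable {n : ℕ} {W : Matrix (Fin n) (Fin n) ℝ} {x : ℕ → Fin n → ℝ} {γ : ℝ}
  (hx : Traj W x) (hW : W ∈ rowStochastic ℝ (Fin n)) (hγ : GammaSetup W x γ)
include hx hW hγ

theorem apply_succ_le_add_alpha {k : ℕ} {M : ℤ} (hM : ∀ j, ⌊x k j⌋ ≤ M) {i : Fin n}
    (hi : x k i ≤ M + alpha W γ i) : x (k + 1) i ≤ M + alpha W γ i := by
  have hwi : 0 ≤ W i i := nonneg_of_mem_rowStochastic hW
  have hiM : (⌊x k i⌋ : ℝ) ≤ M := by exact_mod_cast hM i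
  have hsum := sum_mul_le_of_mem_rowStochastic hW (f := fun j => (⌊x k j⌋ : ℝ))
    (B := M) (fun j => by exact_mod_cast hM j) i
  have hfract : (⌊x k i⌋ : ℝ) ≤ M - 1 ∨ x k i - ⌊x k i⌋ ≤ 1 - W i i := by
    by_contra! h
    have htop : (⌊x k i⌋ : ℝ) = M := by
      have : M - 1 < ⌊x k i⌋ := by exact_mod_cast h.1
      exact_mod_cast le_antisymm (hM i) (by omega)
    linarith [(hγ.2 i k).1 h.2, hγ.1, htop ▸ hi, show alpha W γ i = 1 - W i i + γ from rfl]
  rw [hx k i]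
  unfold alpha at hi ⊢
  rcases hfract with h | h
  · nlinarith [Int.lt_floor_add_one (x k i), hγ.1]
  · nlinarith [hγ.1]

end Traj

namespace Traj

variable {n : ℕ} {W : Matrix (Fin n) (Fin n) ℝ} {x : ℕ → Fin n → ℝ} {γ : ℝ} {k₀ p : ℕ}
  {G : SimpleGraph (Fin n)} (hx : Traj W x) (hW : W ∈ rowStochastic ℝ (Fin n))
  (hγ : GammaSetup W x γ) (hp : 0 < p) (hper : ∀ k ≥ k₀, x (k + p) = x k) (hG : G.Connected)
  (hedge : ∀ i j, G.Adj i j → 0 < W i j) (hn : 0 < n)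
include hx hW hγ hp hper hG hedge

theorem le_Mfun_add_alpha_of_periodic (hmM : mfun hn x k₀ < Mfun hn x k₀) {k : ℕ}
    (hk : k₀ ≤ k) (i : Fin n) : x k i ≤ Mfun hn x k₀ + alpha W γ i := by
  set M := Mfun hn x k₀
  have hM : ∀ t ≥ k₀, ∀ j, ⌊x t j⌋ ≤ M := fun t => hx.floor_le_Mfun_of_periodic hW hp hper hn
  by_contra! hik
  have hviol : ∀ t ≥ k₀, (M : ℝ) + alpha W γ i < x t i := fun t ht => by
    by_contra! hit
    exact hik.not_ge (forall_of_periodic_of_invariant hp hper (P := fun v => v i ≤ M + alpha W γ i)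
      (fun s hs => hx.apply_succ_le_add_alpha hW hγ (hM s hs)) ht hit hk)
  have halpha : 0 < alpha W γ i := by
    unfold alpha
    linarith [le_one_of_mem_rowStochastic hW (i := i) (j := i), hγ.1]
  have htop : ∀ t ≥ k₀, ⌊x t i⌋ = M := fun t ht =>
    le_antisymm (hM t ht i) (Int.le_floor.2 (by linarith [hviol t ht]))
  have hall := hG.forall_of_adj (P := fun j => ∀ t ≥ k₀, ⌊x t j⌋ = M)
    (fun a b hab ha t ht => (hx.floor_eq_of_le_floor_of_periodic hW hp hper
      (fun s hs j _ => (ha s hs).symm ▸ hM s hs j) ht (hedge a b hab)).trans (ha t ht)) htop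
  obtain ⟨j, hj⟩ := exists_floor_eq_mfun hn x k₀
  have := hall j k₀ le_rfl
  omega

end Traj

-- By the gap conditions this is at least `γ` on the top layer `M - 1 + wᵢᵢ ≤ t` and `0` off it.
def topExcess {n : ℕ} (W : Matrix (Fin n) (Fin n) ℝ) (γ : ℝ) (M : ℤ) (i : Fin n) (t : ℝ) : ℝ :=
  max (t - (M - 1 + W i i - γ)) 0

namespace Traj

variable {n : ℕ} {W : Matrix (Fin n) (Fin n) ℝ} {x : ℕ → Fin n → ℝ} {γ : ℝ}
  (hx : Traj W x) (hW : W ∈ rowStochastic ℝ (Fin n)) (hγ : GammaSetup W x γ)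
include hx hW hγ

theorem topExcess_succ_sub_cases {k : ℕ} {M : ℤ} (hM : ∀ j, ⌊x k j⌋ ≤ M) (i : Fin n) :
    (M - 1 + W i i ≤ x k i ∧ M - 1 + W i i ≤ x (k + 1) i ∧
      topExcess W γ M i (x (k + 1) i) - topExcess W γ M i (x k i) =
        netInflow W (fun j => (⌊x k j⌋ : ℝ)) i) ∨
    (x k i < M - 1 + W i i ∧ x (k + 1) i < M - 1 + W i i ∧
      topExcess W γ M i (x (k + 1) i) - topExcess W γ M i (x k i) = 0) ∨
    topExcess W γ M i (x (k + 1) i) - topExcess W γ M i (x k i) ≤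
      netInflow W (fun j => max (⌊x k j⌋ : ℝ) (M - 1)) i - γ := by
  have hin : ∀ t, M - 1 + W i i ≤ t → topExcess W γ M i t = t - (M - 1 + W i i - γ) :=
    fun t ht => max_eq_left (by linarith [hγ.1])
  have hout : ∀ t, x t i < M - 1 + W i i → topExcess W γ M i (x t i) = 0 :=
    fun t ht => max_eq_right (by linarith [hγ.le_sub_two_mul_of_lt hW ht, hγ.1])
  by_cases h₀ : M - 1 + W i i ≤ x k i <;> by_cases h₁ : M - 1 + W i i ≤ x (k + 1) i
  · refine .inl ⟨h₀, h₁, ?_⟩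
    rw [hin _ h₀, hin _ h₁, hx.apply_succ hW]
    ring
  · refine .inr (.inr ?_)
    rw [hin _ h₀, hout _ (not_le.1 h₁)]
    linarith [le_add_netInflow_max_floor hW (hM i) h₀]
  · refine .inr (.inr ?_)
    rw [hout _ (not_le.1 h₀), hin _ h₁]
    linarith [hx.apply_succ_le_of_lt hW hγ (not_le.1 h₀)]
  · refine .inr (.inl ⟨not_le.1 h₀, not_le.1 h₁, ?_⟩)
    rw [hout _ (not_le.1 h₀), hout _ (not_le.1 h₁), sub_zero]

theorem topExcess_succ_sub_le {k : ℕ} {M : ℤ} (hM : ∀ j, ⌊x k j⌋ ≤ M) (i : Fin n) :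
    topExcess W γ M i (x (k + 1) i) - topExcess W γ M i (x k i) ≤
      netInflow W (fun j => max (⌊x k j⌋ : ℝ) (M - 1)) i := by
  rcases hx.topExcess_succ_sub_cases hW hγ hM i with ⟨h₀, -, h⟩ | ⟨h₀, -, h⟩ | h
  · rw [h]
    exact netInflow_floor_le_netInflow_max hW
      (sub_one_le_floor_of_add_le (nonneg_of_mem_rowStochastic hW) h₀)
  · rw [h]
    exact netInflow_max_nonneg hW (floor_le_sub_one_of_lt_add (le_one_of_mem_rowStochastic hW) h₀)
  · linarith [hγ.1]

theorem of_topExcess_succ_sub_eq {k : ℕ} {M : ℤ} (hM : ∀ j, ⌊x k j⌋ ≤ M) {i : Fin n}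
    (heq : topExcess W γ M i (x (k + 1) i) - topExcess W γ M i (x k i) =
      netInflow W (fun j => max (⌊x k j⌋ : ℝ) (M - 1)) i) :
    (M - 1 + W i i ≤ x k i ↔ M - 1 + W i i ≤ x (k + 1) i) ∧
    (M - 1 + W i i ≤ x k i → ∀ j, 0 < W i j → M - 1 ≤ ⌊x k j⌋) ∧
    (x k i < M - 1 + W i i → ∀ j, 0 < W i j → ⌊x k j⌋ ≤ M - 1) := by
  rcases hx.topExcess_succ_sub_cases hW hγ hM i with ⟨h₀, h₁, h⟩ | ⟨h₀, h₁, h⟩ | h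
  · refine ⟨iff_of_true h₀ h₁, fun _ j hij => ?_, fun h₀' => absurd h₀ (not_le.2 h₀')⟩
    exact le_floor_of_netInflow_floor_eq hW
      (sub_one_le_floor_of_add_le (nonneg_of_mem_rowStochastic hW) h₀) (h.symm.trans heq) hij
  · refine ⟨iff_of_false (not_le.2 h₀) (not_le.2 h₁), fun h₀' => absurd h₀' (not_le.2 h₀),
      fun _ j hij => ?_⟩
    exact floor_le_of_netInflow_max_eq_zero hW
      (floor_le_sub_one_of_lt_add (le_one_of_mem_rowStochastic hW) h₀) (heq.symm.trans h) hij
  · linarith [hγ.1]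

variable {k₀ p : ℕ} (hsymm : W.IsSymm) (hp : 0 < p) (hper : ∀ k ≥ k₀, x (k + p) = x k)
  (hn : 0 < n)
include hsymm hp hper

theorem topExcess_succ_sub_eq_of_periodic {k : ℕ} (hk : k₀ ≤ k) (i : Fin n) :
    topExcess W γ (Mfun hn x k₀) i (x (k + 1) i) - topExcess W γ (Mfun hn x k₀) i (x k i) =
      netInflow W (fun j => max (⌊x k j⌋ : ℝ) (Mfun hn x k₀ - 1)) i := by
  set M := Mfun hn x k₀
  have hM : ∀ t ≥ k₀, ∀ j, ⌊x t j⌋ ≤ M := fun t => hx.floor_le_Mfun_of_periodic hW hp hper hn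
  set Ψ : ℕ → ℝ := fun t => ∑ j, topExcess W γ M j (x t j)
  have hanti : ∀ t ≥ k₀, Ψ (t + 1) ≤ Ψ t := fun t ht => by
    have := Finset.sum_le_sum fun j (_ : j ∈ Finset.univ) =>
      hx.topExcess_succ_sub_le hW hγ (hM t ht) j
    rw [Finset.sum_sub_distrib, sum_netInflow_eq_zero hsymm] at this
    linarith
  have hΨper : ∀ t ≥ k₀, Ψ (t + p) = Ψ t := fun t ht => by simp only [Ψ, hper t ht]
  have hΨ : Ψ (k + 1) = Ψ k := by
    rw [eq_of_succ_le_of_periodic hp hΨper hanti hk,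
      eq_of_succ_le_of_periodic hp hΨper hanti (hk.trans k.le_succ)]
  have hsum : ∑ j, (netInflow W (fun l => max (⌊x k l⌋ : ℝ) (M - 1)) j -
      (topExcess W γ M j (x (k + 1) j) - topExcess W γ M j (x k j))) = 0 := by
    rw [Finset.sum_sub_distrib, sum_netInflow_eq_zero hsymm, Finset.sum_sub_distrib]
    simp only [Ψ] at hΨ
    linarith
  have := (Finset.sum_eq_zero_iff_of_nonneg fun j _ =>
    sub_nonneg.2 (hx.topExcess_succ_sub_le hW hγ (hM k hk) j)).1 hsum i (Finset.mem_univ i)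
  linarith

variable {G : SimpleGraph (Fin n)} (hG : G.Connected) (hedge : ∀ i j, G.Adj i j → 0 < W i j)
include hG hedge

theorem Mfun_sub_one_add_le_of_periodic {k : ℕ} (hk : k₀ ≤ k) (i : Fin n) :
    (Mfun hn x k₀ : ℝ) - 1 + W i i ≤ x k i := by
  set M := Mfun hn x k₀
  have hM : ∀ t ≥ k₀, ∀ j, ⌊x t j⌋ ≤ M := fun t => hx.floor_le_Mfun_of_periodic hW hp hper hn
  have hstep := fun t (ht : k₀ ≤ t) j => hx.of_topExcess_succ_sub_eq hW hγ (hM t ht)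
    (hx.topExcess_succ_sub_eq_of_periodic hW hγ hsymm hp hper hn ht j)
  have htop : ∀ j, ∀ t ≥ k₀, (M - 1 + W j j ≤ x t j ↔ M - 1 + W j j ≤ x k₀ j) := fun j t ht => by
    induction t, ht using Nat.le_induction with
    | base => rfl
    | succ t ht ih => exact (hstep t ht j).1.symm.trans ih
  suffices h : ∀ j, M - 1 + W j j ≤ x k₀ j from (htop i k hk).2 (h i)
  by_contra! ⟨i₀, hi₀⟩
  have hbelow : ∀ j, ∀ t ≥ k₀, ¬ M - 1 + W j j ≤ x k₀ j → x t j < M - 1 + W j j :=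
    fun j t ht hj => not_le.1 (mt (htop j t ht).1 hj)
  have hall := hG.forall_of_adj (P := fun j => ∀ t ≥ k₀, ⌊x t j⌋ ≤ M - 1)
    (fun a b hab ha t ht => by
      by_cases hmem : M - 1 + W a a ≤ x k₀ a
      · have hfloor : ∀ s ≥ k₀, ⌊x s a⌋ = M - 1 := fun s hs => le_antisymm (ha s hs)
          (sub_one_le_floor_of_add_le (nonneg_of_mem_rowStochastic hW) ((htop a s hs).2 hmem))
        rw [hx.floor_eq_of_floor_le_of_periodic hW hp hper (fun s hs j hj => (hfloor s hs).symm ▸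
          (hstep s hs a).2.1 ((htop a s hs).2 hmem) j hj) ht (hedge a b hab), hfloor t ht]
      · exact (hstep t ht a).2.2 (hbelow a t ht hmem) b (hedge a b hab))
    fun t ht => floor_le_sub_one_of_lt_add (le_one_of_mem_rowStochastic hW)
      (hbelow i₀ t ht (not_le.2 hi₀))
  obtain ⟨j, hj⟩ := exists_floor_eq_Mfun hn x k₀
  have := hall j k₀ le_rfl
  omega

end Traj

/-- Proposition 3: in finite time either `X3 ∪ X4 ∪ X5 ∪ X6 = ∅` (all nodes in `X1 ∪ X2`)
or `X1 ∪ X4 ∪ X5 ∪ X6 = ∅` (all nodes in `X2 ∪ X3`). -/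
theorem X1_or_X3_empty {n : ℕ} (hn : 1 < n)
    (G : SimpleGraph (Fin n)) (hG : G.Connected)
    (W : Matrix (Fin n) (Fin n) ℝ) (hW : Assumption1 G W)
    (x : ℕ → Fin n → ℝ) (hx : Traj W x)
    (γ : ℝ) (hγ : GammaSetup W x γ) :
    ∃ K : ℕ, ∀ k, K ≤ k →
      (∀ i, x k i < (mfun (Nat.zero_lt_one.trans hn) x k : ℝ) + 1) ∨
      (∀ i, (mfun (Nat.zero_lt_one.trans hn) x k : ℝ) + 1 - alpha W γ i ≤ x k i ∧
        x k i ≤ (mfun (Nat.zero_lt_one.trans hn) x k : ℝ) + 1 + alpha W γ i) := by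
  obtain ⟨hsymm, hnonneg, hrow, -, hzero, hedge⟩ := hW
  have hstoch : W ∈ rowStochastic ℝ (Fin n) := mem_rowStochastic_iff_sum.2 ⟨hnonneg, hrow⟩
  have hpos i j (hij : G.Adj i j) : 0 < W i j := (hedge i j hij).2.1
  have hrat i j (hij : i ≠ j) : ∃ q : ℚ, (q : ℝ) = W i j := by
    by_cases hadj : G.Adj i j
    · exact (hedge i j hadj).1
    · exact ⟨0, by simp [hzero i j hij hadj]⟩
  set hn₀ := Nat.zero_lt_one.trans hn
  obtain ⟨k₀, p, hp, hper⟩ := hx.exists_periodic hstoch hn₀ hrat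
  refine ⟨k₀, fun k hk => ?_⟩
  have hlow := hx.Mfun_sub_one_add_le_of_periodic hstoch hγ (IsSymm.ext fun i j => hsymm j i) hp
    hper hn₀ hG hpos hk
  rw [hx.mfun_eq_of_periodic_s14 hstoch hp hper hn₀ hk]
  obtain ⟨j, hj⟩ := exists_floor_eq_mfun hn₀ x k
  have hspread : Mfun hn₀ x k₀ - 1 ≤ mfun hn₀ x k₀ := by
    rw [← hx.mfun_eq_of_periodic_s14 hstoch hp hper hn₀ hk, ← hj]
    exact sub_one_le_floor_of_add_le (nonneg_of_mem_rowStochastic hstoch) (hlow j)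
  by_cases hmM : mfun hn₀ x k₀ < Mfun hn₀ x k₀
  · have hM : (Mfun hn₀ x k₀ : ℝ) = mfun hn₀ x k₀ + 1 := by exact_mod_cast (by omega : _ = _)
    refine .inr fun i => ⟨?_, ?_⟩
    · linarith [hlow i, show alpha W γ i = 1 - W i i + γ from rfl, hγ.1]
    · linarith [hx.le_Mfun_add_alpha_of_periodic hstoch hγ hp hper hG hpos hn₀ hmM hk i]
  · refine .inl fun i => ?_
    have hfloor : ⌊x k i⌋ ≤ mfun hn₀ x k₀ :=
      (floor_le_Mfun hn₀ x k i).trans (by rw [hx.Mfun_eq_of_periodic hstoch hp hper hn₀ hk]; omega)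
    have : (⌊x k i⌋ : ℝ) ≤ mfun hn₀ x k₀ := by exact_mod_cast hfloor
    linarith [Int.lt_floor_add_one (x k i)]
end

section
/- Two-node cyclic example: let n = 2 with a single edge between nodes a and b, and let W = [[w, 1−w], [1−w, w]] with w ∈ (0,1). Let K be a positive integer and ξ ∈ (0,1), and take initial values x_a(0) = ξ and x_b(0) = K + ξ, so x_ave = K/2 + ξ. If w·K < min{ξ, 1 − ξ}, then the quantized system x(k+1) = W⌊x(k)⌋ + x(k) − ⌊x(k)⌋ satisfies, for every k ≥ 0: x_a(k) = ξ and x_b(k) = K + ξ when k is even, and x_a(k) = K + ξ − wK and x_b(k) = wK + ξ when k is odd. In particular, for every even k, |x_a(k) − x_ave| = |x_b(k) − x_ave| = K/2, so limsup_{k→∞} (1/√2)·‖x(k) − x_ave·1‖₂ ≥ K/2. -/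
/-! While `w·K < min{ξ, 1 − ξ}`, the floors of the two states are `(0, K)` and `(K, 0)` in turn,
so each step moves `(1 − w)K` across the edge in alternating directions: the quantized map swaps
`(ξ, K + ξ)` and `(K + ξ − wK, wK + ξ)` and never leaves this two-cycle. -/

open Filter Set

/-- One step `x ↦ W⌊x⌋ + x − ⌊x⌋` of the quantized system on the two-node graph. -/
noncomputable def quantizedStep (w : ℝ) (x : ℝ × ℝ) : ℝ × ℝ :=
  (x.1 + (1 - w) * ((⌊x.2⌋ : ℝ) - ⌊x.1⌋), x.2 + (1 - w) * ((⌊x.1⌋ : ℝ) - ⌊x.2⌋))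

lemma quantizedStep_eq_of_floor {w : ℝ} {x : ℝ × ℝ} {m n : ℤ} (hm : ⌊x.1⌋ = m) (hn : ⌊x.2⌋ = n) :
    quantizedStep w x = (x.1 + (1 - w) * (n - m), x.2 + (1 - w) * (m - n)) := by
  simp only [quantizedStep, hm, hn]

lemma quantizedStep_even_state (w ξ : ℝ) (K : ℤ) (hξ : ξ ∈ Ico (0 : ℝ) 1) :
    quantizedStep w (ξ, K + ξ) = (K + ξ - w * K, w * K + ξ) := by
  have hfloor : ⌊ξ⌋ = 0 := Int.floor_eq_zero_iff.2 hξ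
  rw [quantizedStep_eq_of_floor hfloor (by rw [Int.floor_intCast_add, hfloor, add_zero])]
  ext <;> simp only <;> push_cast <;> ring

lemma quantizedStep_odd_state (w ξ : ℝ) (K : ℤ) (hlo : ξ - w * K ∈ Ico (0 : ℝ) 1)
    (hhi : w * K + ξ ∈ Ico (0 : ℝ) 1) :
    quantizedStep w (K + ξ - w * K, w * K + ξ) = (ξ, K + ξ) := by
  have hK : ⌊(K : ℝ) + ξ - w * K⌋ = K := by
    rw [add_sub_assoc, Int.floor_intCast_add, Int.floor_eq_zero_iff.2 hlo, add_zero]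
  rw [quantizedStep_eq_of_floor hK (Int.floor_eq_zero_iff.2 hhi)]
  ext <;> simp only <;> push_cast <;> ring

lemma eq_ite_even_of_two_cycle {α : Type*} {f : α → α} {p : ℕ → α} {a b : α}
    (hp : ∀ k, p (k + 1) = f (p k)) (h0 : p 0 = a) (hab : f a = b) (hba : f b = a) :
    ∀ k, p k = if Even k then a else b := by
  intro k
  induction k with
  | zero => simpa using h0
  | succ k ih =>
    rw [hp, ih]
    by_cases hk : Even k <;> simp [hk, Nat.even_add_one, hab, hba]

lemma Function.Periodic.finite_range_of_nat {α : Type*} {u : ℕ → α} {n : ℕ}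
    (hu : Function.Periodic u n) (hn : 0 < n) : (range u).Finite :=
  ((finite_lt_nat n).image u).subset <|
    range_subset_iff.2 fun k => ⟨k % n, Nat.mod_lt k hn, hu.map_mod_nat k⟩

lemma le_limsup_of_frequently_of_finite_range {α β : Type*} [ConditionallyCompleteLinearOrder β]
    {f : Filter α} {u : α → β} {c : β} (hu : (range u).Finite) (h : ∃ᶠ k in f, c ≤ u k) :
    c ≤ limsup u f :=
  le_limsup_of_frequently_le h hu.bddAbove.isBoundedUnder_of_range

lemma one_div_sqrt_two_mul_sqrt_sq_add_sq_of_abs_eq {a b : ℝ} (h : |a| = |b|) :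
    1 / √2 * √(a ^ 2 + b ^ 2) = |a| := by
  rw [← sq_abs b, ← h, sq_abs, ← two_mul, Real.sqrt_mul zero_le_two, Real.sqrt_sq_eq_abs]
  field_simp

theorem two_node_cycle_general (w : ℝ) (hw0 : 0 < w)
    (K : ℕ) (ξ : ℝ) (hξ0 : 0 < ξ) (hξ1 : ξ < 1)
    (xa xb : ℕ → ℝ)
    (ha0 : xa 0 = ξ) (hb0 : xb 0 = (K : ℝ) + ξ)
    (ha : ∀ k, xa (k + 1) = xa k + (1 - w) * ((⌊xb k⌋ : ℝ) - (⌊xa k⌋ : ℝ)))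
    (hb : ∀ k, xb (k + 1) = xb k + (1 - w) * ((⌊xa k⌋ : ℝ) - (⌊xb k⌋ : ℝ)))
    (hcycle : w * (K : ℝ) < min ξ (1 - ξ)) :
    (∀ k, Even k → xa k = ξ ∧ xb k = (K : ℝ) + ξ) ∧
    (∀ k, Odd k → xa k = (K : ℝ) + ξ - w * (K : ℝ) ∧ xb k = w * (K : ℝ) + ξ) ∧
    (∀ k, Even k →
      |xa k - ((K : ℝ) / 2 + ξ)| = (K : ℝ) / 2 ∧
      |xb k - ((K : ℝ) / 2 + ξ)| = (K : ℝ) / 2) ∧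
    (K : ℝ) / 2 ≤ Filter.limsup
      (fun k : ℕ => (1 / Real.sqrt 2) *
        Real.sqrt ((xa k - ((K : ℝ) / 2 + ξ)) ^ 2 + (xb k - ((K : ℝ) / 2 + ξ)) ^ 2))
      Filter.atTop := by
  have hwK : 0 ≤ w * K := by positivity
  obtain ⟨hwKξ, hwK1ξ⟩ := lt_min_iff.1 hcycle
  have heven_step := quantizedStep_even_state w ξ K ⟨hξ0.le, hξ1⟩
  have hodd_step := quantizedStep_odd_state w ξ K
    (by push_cast; exact ⟨by linarith, by linarith⟩) (by push_cast; exact ⟨by linarith, by linarith⟩)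
  push_cast at heven_step hodd_step
  have hstate := eq_ite_even_of_two_cycle (p := fun k => (xa k, xb k))
    (fun k => Prod.ext (ha k) (hb k)) (Prod.ext ha0 hb0) heven_step hodd_step
  have heven k (hk : Even k) : xa k = ξ ∧ xb k = K + ξ := by simpa [hk] using hstate k
  have hdist k (hk : Even k) : |xa k - (K / 2 + ξ)| = K / 2 ∧ |xb k - (K / 2 + ξ)| = K / 2 := by
    obtain ⟨hxa, hxb⟩ := heven k hk
    rw [hxa, hxb, abs_of_nonpos (by linarith), abs_of_nonneg (by linarith)]
    constructor <;> ring
  refine ⟨heven, fun k hk => by simpa [Nat.not_even_iff_odd.2 hk] using hstate k, hdist, ?_⟩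
  refine le_limsup_of_frequently_of_finite_range ?_ (frequently_atTop.2 fun N =>
    ⟨2 * N, by omega, ?_⟩)
  · have hper k : xa (k + 2) = xa k ∧ xb (k + 2) = xb k := by
      simpa [Nat.even_add, ← hstate k] using hstate (k + 2)
    exact Function.Periodic.finite_range_of_nat (fun k => by rw [(hper k).1, (hper k).2]) two_pos
  · obtain ⟨h₁, h₂⟩ := hdist (2 * N) (even_two_mul N)
    rw [one_div_sqrt_two_mul_sqrt_sq_add_sq_of_abs_eq (h₁.trans h₂.symm), h₁]

/-- Two-node cyclic example: with `w·K < min{ξ, 1−ξ}` the two-node quantized system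
cycles, staying at distance `K/2` from the average on even iterations. -/
theorem two_node_cycle (w : ℝ) (hw0 : 0 < w) (hw1 : w < 1)
    (K : ℕ) (hK : 0 < K) (ξ : ℝ) (hξ0 : 0 < ξ) (hξ1 : ξ < 1)
    (xa xb : ℕ → ℝ)
    (ha0 : xa 0 = ξ) (hb0 : xb 0 = (K : ℝ) + ξ)
    (ha : ∀ k, xa (k + 1) = xa k + (1 - w) * ((⌊xb k⌋ : ℝ) - (⌊xa k⌋ : ℝ)))
    (hb : ∀ k, xb (k + 1) = xb k + (1 - w) * ((⌊xa k⌋ : ℝ) - (⌊xb k⌋ : ℝ)))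
    (hcycle : w * (K : ℝ) < min ξ (1 - ξ)) :
    (∀ k, Even k → xa k = ξ ∧ xb k = (K : ℝ) + ξ) ∧
    (∀ k, Odd k → xa k = (K : ℝ) + ξ - w * (K : ℝ) ∧ xb k = w * (K : ℝ) + ξ) ∧
    (∀ k, Even k →
      |xa k - ((K : ℝ) / 2 + ξ)| = (K : ℝ) / 2 ∧
      |xb k - ((K : ℝ) / 2 + ξ)| = (K : ℝ) / 2) ∧
    (K : ℝ) / 2 ≤ Filter.limsup
      (fun k : ℕ => (1 / Real.sqrt 2) *
        Real.sqrt ((xa k - ((K : ℝ) / 2 + ξ)) ^ 2 + (xb k - ((K : ℝ) / 2 + ξ)) ^ 2))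
      Filter.atTop :=
  two_node_cycle_general w hw0 K ξ hξ0 hξ1 xa xb ha0 hb0 ha hb hcycle
end
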